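/- arXiv:0709.1205 — 4 statements merged into one kernel-verified Lean document; each statement's English description precedes it below -/
import Mathlib

section
/- The flow rewriting system w is terminating: there is no infinite chain of atomic flows A₁ →_w A₂ →_w A₃ →_w ⋯. -/
set_option linter.unusedVariables false

namespace AF

/-! ### Formulae of system SKS.

Atoms are pairs `(n, b)`; the involution `ā` flips the Boolean, so it is
fixed-point free. -/

inductive Formula : Type
  | tt : Formula
  | ff : Formula
  | atom : ℕ → Bool → Formula
  | or : Formula → Formula → Formula
  | and : Formula → Formula → Formula
  deriving DecidableEq

namespace Formula

/-- Subformula at a position (`false` = left child, `true` = right child). -/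
def sub : Formula → List Bool → Option Formula
  | φ, [] => some φ
  | .or α _, false :: p => sub α p
  | .or _ β, true :: p => sub β p
  | .and α _, false :: p => sub α p
  | .and _ β, true :: p => sub β p
  | _, _ :: _ => none

/-- Replace the subformula at a position. -/
def repl : Formula → List Bool → Formula → Formula
  | _, [], ψ => ψ
  | .or α β, false :: p, ψ => .or (repl α p ψ) β
  | .or α β, true :: p, ψ => .or α (repl β p ψ)
  | .and α β, false :: p, ψ => .and (repl α p ψ) β
  | .and α β, true :: p, ψ => .and α (repl β p ψ)
  | φ, _ :: _, _ => φ

/-- `p` is an atom occurrence of `φ`. -/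
def IsOcc (φ : Formula) (p : List Bool) : Prop :=
  ∃ n b, φ.sub p = some (.atom n b)

end Formula

/-! ### Inference rules.

The rule `=` of SKS replaces a formula by an equivalent one under
commutativity, associativity and the unit equations; each single instance of
`=` applies one equation (in either direction), so we list the equations as
individual rule names, all marked as being instances of `=` via `isEq`. -/

inductive RuleName : Type
  | aiDown | aiUp | awDown | awUp | acDown | acUp
  | s | m
  | eqOrComm | eqAndComm
  | eqOrAssocL | eqOrAssocR | eqAndAssocL | eqAndAssocR
  | eqOrUnitDel | eqOrUnitAdd | eqAndUnitDel | eqAndUnitAdd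
  | eqTTDel | eqTTAdd | eqFFDel | eqFFAdd
  deriving DecidableEq

namespace RuleName

/-- The atomic structural rules. -/
def isStructural : RuleName → Bool
  | .aiDown | .aiUp | .awDown | .awUp | .acDown | .acUp => true
  | _ => false

/-- The rule names that are instances of the rule `=`. -/
def isEq : RuleName → Bool
  | .aiDown | .aiUp | .awDown | .awUp | .acDown | .acUp | .s | .m => false
  | _ => true

end RuleName

/-- Rule instances (redex ⟹ contractum). -/
inductive RuleInstance : RuleName → Formula → Formula → Prop
  | aiDown (n : ℕ) (b : Bool) :
      RuleInstance .aiDown .tt (.or (.atom n b) (.atom n (!b)))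
  | aiUp (n : ℕ) (b : Bool) :
      RuleInstance .aiUp (.and (.atom n b) (.atom n (!b))) .ff
  | awDown (n : ℕ) (b : Bool) : RuleInstance .awDown .ff (.atom n b)
  | awUp (n : ℕ) (b : Bool) : RuleInstance .awUp (.atom n b) .tt
  | acDown (n : ℕ) (b : Bool) :
      RuleInstance .acDown (.or (.atom n b) (.atom n b)) (.atom n b)
  | acUp (n : ℕ) (b : Bool) :
      RuleInstance .acUp (.atom n b) (.and (.atom n b) (.atom n b))
  | s (α β γ : Formula) :
      RuleInstance .s (.and α (.or β γ)) (.or (.and α β) γ)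
  | m (α β γ δ : Formula) :
      RuleInstance .m (.or (.and α β) (.and γ δ)) (.and (.or α γ) (.or β δ))
  | eqOrComm (α β : Formula) : RuleInstance .eqOrComm (.or α β) (.or β α)
  | eqAndComm (α β : Formula) : RuleInstance .eqAndComm (.and α β) (.and β α)
  | eqOrAssocL (α β γ : Formula) :
      RuleInstance .eqOrAssocL (.or (.or α β) γ) (.or α (.or β γ))
  | eqOrAssocR (α β γ : Formula) :
      RuleInstance .eqOrAssocR (.or α (.or β γ)) (.or (.or α β) γ)
  | eqAndAssocL (α β γ : Formula) :
      RuleInstance .eqAndAssocL (.and (.and α β) γ) (.and α (.and β γ))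
  | eqAndAssocR (α β γ : Formula) :
      RuleInstance .eqAndAssocR (.and α (.and β γ)) (.and (.and α β) γ)
  | eqOrUnitDel (α : Formula) : RuleInstance .eqOrUnitDel (.or α .ff) α
  | eqOrUnitAdd (α : Formula) : RuleInstance .eqOrUnitAdd α (.or α .ff)
  | eqAndUnitDel (α : Formula) : RuleInstance .eqAndUnitDel (.and α .tt) α
  | eqAndUnitAdd (α : Formula) : RuleInstance .eqAndUnitAdd α (.and α .tt)
  | eqTTDel : RuleInstance .eqTTDel (.or .tt .tt) .tt
  | eqTTAdd : RuleInstance .eqTTAdd .tt (.or .tt .tt)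
  | eqFFDel : RuleInstance .eqFFDel (.and .ff .ff) .ff
  | eqFFAdd : RuleInstance .eqFFAdd .ff (.and .ff .ff)

/-- One (deep) inference step applying rule `r` at position `q`. -/
def StepAt (r : RuleName) (q : List Bool) (φ ψ : Formula) : Prop :=
  ∃ γ δ, φ.sub q = some γ ∧ RuleInstance r γ δ ∧ ψ = φ.repl q δ

/-- One inference step using a rule from the set `S`. -/
def Step (S : Set RuleName) (φ ψ : Formula) : Prop :=
  ∃ r ∈ S, ∃ q, StepAt r q φ ψ

/-- There is a derivation from `φ` to `ψ` using only rules from `S`. -/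
def Derives (S : Set RuleName) : Formula → Formula → Prop :=
  Relation.ReflTransGen (Step S)

/-! ### Derivations as explicit data (for the theory of atomic flows). -/

/-- A derivation: a premiss and a chain of steps, each recorded by its rule
name, the position of the redex, and the resulting formula. -/
structure Deriv : Type where
  prem : Formula
  steps : List (RuleName × List Bool × Formula)

namespace Deriv

/-- The `i`-th step datum. -/
def stepAt (Φ : Deriv) (i : ℕ) : RuleName × List Bool × Formula :=
  Φ.steps.getD i (RuleName.s, ([] : List Bool), Formula.tt)

/-- The `i`-th formula of the derivation (`0` is the premiss). -/
def fml (Φ : Deriv) (i : ℕ) : Formula :=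
  (Φ.prem :: Φ.steps.map (fun t => t.2.2)).getD i Φ.prem

/-- Number of formulae in the derivation. -/
def nf (Φ : Deriv) : ℕ := Φ.steps.length + 1

/-- The conclusion of the derivation. -/
def concl (Φ : Deriv) : Formula := Φ.fml Φ.steps.length

/-- The derivation is well formed: every recorded step is a correct
inference step of SKS. -/
def WF (Φ : Deriv) : Prop :=
  ∀ i, i < Φ.steps.length →
    StepAt (Φ.stepAt i).1 (Φ.stepAt i).2.1 (Φ.fml i) (Φ.fml (i + 1))

end Deriv

/-! ### Atomic flows. -/

inductive FlowLabel : Type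
  | aiDown | aiUp | awDown | awUp | acDown | acUp
  deriving DecidableEq

/-- Required (number of lower edges, number of upper edges) of a vertex. -/
def labDeg : FlowLabel → ℕ × ℕ
  | .aiDown => (2, 0)
  | .aiUp => (0, 2)
  | .awDown => (1, 0)
  | .awUp => (0, 1)
  | .acDown => (1, 2)
  | .acUp => (2, 1)

/-- The data of an atomic flow: vertices, edges, labels, and the two
endpoint maps.  `up e = none` means the upper endpoint is `⊤`, and
`lo e = none` means the lower endpoint is `⊥`. -/
structure PreFlow : Type where
  V : Finset ℕ
  E : Finset ℕ
  η : ℕ → FlowLabel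
  up : ℕ → Option ℕ
  lo : ℕ → Option ℕ

namespace PreFlow

/-- Lower edges of a vertex. -/
def Ledges (F : PreFlow) (v : ℕ) : Finset ℕ :=
  F.E.filter (fun e => F.up e = some v)

/-- Upper edges of a vertex. -/
def Uedges (F : PreFlow) (v : ℕ) : Finset ℕ :=
  F.E.filter (fun e => F.lo e = some v)

/-- All edges of a vertex. -/
def edges (F : PreFlow) (v : ℕ) : Finset ℕ := F.Ledges v ∪ F.Uedges v

def degOK (F : PreFlow) : Prop :=
  ∀ v ∈ F.V, (F.Ledges v).card = (labDeg (F.η v)).1 ∧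
    (F.Uedges v).card = (labDeg (F.η v)).2

def endpointsOK (F : PreFlow) : Prop :=
  ∀ e ∈ F.E, (∀ v, F.up e = some v → v ∈ F.V) ∧
    (∀ v, F.lo e = some v → v ∈ F.V)

/-- No cyclic sequence of edges `ε₁, …, ε_h` with
`up (ε_i) = lo (ε_(i+1 mod h))`. -/
def Acyclic (F : PreFlow) : Prop :=
  ¬ ∃ (h : ℕ) (ε : Fin (h + 1) → ℕ), (∀ i, ε i ∈ F.E) ∧
      ∀ i : Fin (h + 1), (F.up (ε i)).isSome ∧ F.up (ε i) = F.lo (ε (i + 1))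

/-- `π` is a polarity assignment (`false` = `−`, `true` = `+`). -/
def PolarityOK (F : PreFlow) (π : ℕ → Bool) : Prop :=
  ∀ v ∈ F.V,
    ((F.η v = .acDown ∨ F.η v = .acUp) →
      ∀ e₁ ∈ F.edges v, ∀ e₂ ∈ F.edges v, π e₁ = π e₂) ∧
    ((F.η v = .aiDown ∨ F.η v = .aiUp) →
      ∃ e₁ ∈ F.edges v, ∃ e₂ ∈ F.edges v, π e₁ ≠ π e₂)

/-- `F` is an atomic flow. -/
def IsFlow (F : PreFlow) : Prop :=
  F.degOK ∧ F.endpointsOK ∧ F.Acyclic ∧ ∃ π, F.PolarityOK π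

end PreFlow

/-! ### Paths, ai-paths, cycles. -/

/-- An endpoint of a path: a vertex, or `⊤`, or `⊥`. -/
inductive VPt : Type
  | ver : ℕ → VPt
  | top : VPt
  | bot : VPt
  deriving DecidableEq

/-- The upper endpoint of edge `e` is `ν`. -/
def srcOK (F : PreFlow) (ν : VPt) (e : ℕ) : Prop :=
  match ν with
  | .ver v => F.up e = some v
  | .top => F.up e = none
  | .bot => False

/-- The lower endpoint of edge `e` is `ν`. -/
def tgtOK (F : PreFlow) (ν : VPt) (e : ℕ) : Prop :=
  match ν with
  | .ver v => F.lo e = some v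
  | .bot => F.lo e = none
  | .top => False

/-- A downward path from `ν` to `ν'` (a nonempty sequence of edges, each
hanging from the lower endpoint of the previous one). -/
def IsDownPath (F : PreFlow) (ν ν' : VPt) (l : List ℕ) : Prop :=
  l ≠ [] ∧ (∀ e ∈ l, e ∈ F.E) ∧
  (∀ i, i + 1 < l.length →
    ∃ v ∈ F.V, F.lo (l.getD i 0) = some v ∧ F.up (l.getD (i + 1) 0) = some v) ∧
  srcOK F ν (l.getD 0 0) ∧ tgtOK F ν' (l.getD (l.length - 1) 0)

/-- A path from `ν` to `ν'`: a downward path, or the reverse of a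
downward path from `ν'` to `ν`. -/
def IsPath (F : PreFlow) (ν ν' : VPt) (l : List ℕ) : Prop :=
  IsDownPath F ν ν' l ∨ IsDownPath F ν' ν l.reverse

/-- ai-paths: paths, closed under concatenation (in distinct edges) at
interaction and cointeraction vertices. -/
inductive AIPath (F : PreFlow) : VPt → VPt → List ℕ → Prop
  | single {ν ν' : VPt} {l : List ℕ} : IsPath F ν ν' l → AIPath F ν ν' l
  | join {ν ν' : VPt} {v : ℕ} {l₁ l₂ : List ℕ} {e e' : ℕ} :
      v ∈ F.V → (F.η v = .aiDown ∨ F.η v = .aiUp) →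
      AIPath F ν (.ver v) (l₁ ++ [e]) →
      AIPath F (.ver v) ν' (e' :: l₂) →
      e ≠ e' →
      AIPath F ν ν' (l₁ ++ [e] ++ e' :: l₂)

/-- The flow contains an ai-cycle: an ai-path from a vertex to itself in
which no edge appears twice. -/
def HasAICycle (F : PreFlow) : Prop :=
  ∃ v l, v ∈ F.V ∧ AIPath F (.ver v) (.ver v) l ∧ l.Nodup

def CycleFree (F : PreFlow) : Prop := ¬ HasAICycle F

/-- An ai-connection: a path from an interaction vertex to a cointeraction
vertex or vice versa. -/
def IsConnection (F : PreFlow) (l : List ℕ) : Prop :=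
  ∃ v v', v ∈ F.V ∧ v' ∈ F.V ∧
    ((F.η v = .aiDown ∧ F.η v' = .aiUp) ∨
     (F.η v = .aiUp ∧ F.η v' = .aiDown)) ∧
    IsPath F (.ver v) (.ver v') l

/-- A simple edge: an ai-connection consisting of a single edge. -/
def SimpleEdge (F : PreFlow) (e : ℕ) : Prop := IsConnection F [e]

/-- A clean path: an ai-path all of whose ai-connections are simple edges. -/
def IsCleanPath (F : PreFlow) (ν ν' : VPt) (l : List ℕ) : Prop :=
  AIPath F ν ν' l ∧
  ∀ l₁ l₂ l₃, l = l₁ ++ l₂ ++ l₃ → IsConnection F l₂ → l₂.length = 1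

/-! ### Local flow reduction rules. -/

open PreFlow

/-- Rule `w↓-c↓`: a weakening feeding a contraction is erased, merging the
contraction's other two edges. -/
def RedWdCd (A B : PreFlow) : Prop :=
  ∃ v₁ v₂ e e₂ e₃,
    v₁ ∈ A.V ∧ v₂ ∈ A.V ∧ v₁ ≠ v₂ ∧
    A.η v₁ = .awDown ∧ A.η v₂ = .acDown ∧
    e ∈ A.E ∧ e₂ ∈ A.E ∧ e₃ ∈ A.E ∧ e ≠ e₂ ∧ e ≠ e₃ ∧ e₂ ≠ e₃ ∧
    A.up e = some v₁ ∧ A.lo e = some v₂ ∧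
    A.lo e₂ = some v₂ ∧ A.up e₃ = some v₂ ∧
    B.V = (A.V.erase v₁).erase v₂ ∧
    B.E = (A.E.erase e).erase e₃ ∧
    B.η = A.η ∧ B.up = A.up ∧
    B.lo = Function.update A.lo e₂ (A.lo e₃)

/-- Rule `c↑-w↑` (dual of `w↓-c↓`). -/
def RedCuWu (A B : PreFlow) : Prop :=
  ∃ v₁ v₂ e e₂ e₃,
    v₁ ∈ A.V ∧ v₂ ∈ A.V ∧ v₁ ≠ v₂ ∧
    A.η v₁ = .awUp ∧ A.η v₂ = .acUp ∧
    e ∈ A.E ∧ e₂ ∈ A.E ∧ e₃ ∈ A.E ∧ e ≠ e₂ ∧ e ≠ e₃ ∧ e₂ ≠ e₃ ∧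
    A.lo e = some v₁ ∧ A.up e = some v₂ ∧
    A.up e₂ = some v₂ ∧ A.lo e₃ = some v₂ ∧
    B.V = (A.V.erase v₁).erase v₂ ∧
    B.E = (A.E.erase e).erase e₃ ∧
    B.η = A.η ∧ B.lo = A.lo ∧
    B.up = Function.update A.up e₂ (A.up e₃)

/-- Rule `w↓-i↑`: a weakening feeding a cointeraction is replaced by a
coweakening on the other cointeraction edge. -/
def RedWdIu (A B : PreFlow) : Prop :=
  ∃ v₁ v₂ e e₂,
    v₁ ∈ A.V ∧ v₂ ∈ A.V ∧ v₁ ≠ v₂ ∧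
    A.η v₁ = .awDown ∧ A.η v₂ = .aiUp ∧
    e ∈ A.E ∧ e₂ ∈ A.E ∧ e ≠ e₂ ∧
    A.up e = some v₁ ∧ A.lo e = some v₂ ∧ A.lo e₂ = some v₂ ∧
    B.V = A.V.erase v₁ ∧ B.E = A.E.erase e ∧
    B.η = Function.update A.η v₂ .awUp ∧
    B.up = A.up ∧ B.lo = A.lo

/-- Rule `i↓-w↑` (dual of `w↓-i↑`). -/
def RedIdWu (A B : PreFlow) : Prop :=
  ∃ v₁ v₂ e e₂,
    v₁ ∈ A.V ∧ v₂ ∈ A.V ∧ v₁ ≠ v₂ ∧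
    A.η v₁ = .awUp ∧ A.η v₂ = .aiDown ∧
    e ∈ A.E ∧ e₂ ∈ A.E ∧ e ≠ e₂ ∧
    A.lo e = some v₁ ∧ A.up e = some v₂ ∧ A.up e₂ = some v₂ ∧
    B.V = A.V.erase v₁ ∧ B.E = A.E.erase e ∧
    B.η = Function.update A.η v₂ .awDown ∧
    B.up = A.up ∧ B.lo = A.lo

/-- Rule `w↓-w↑`: a weakening joined to a coweakening is erased. -/
def RedWdWu (A B : PreFlow) : Prop :=
  ∃ v₁ v₂ e,
    v₁ ∈ A.V ∧ v₂ ∈ A.V ∧ v₁ ≠ v₂ ∧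
    A.η v₁ = .awDown ∧ A.η v₂ = .awUp ∧
    e ∈ A.E ∧ A.up e = some v₁ ∧ A.lo e = some v₂ ∧
    B.V = (A.V.erase v₁).erase v₂ ∧ B.E = A.E.erase e ∧
    B.η = A.η ∧ B.up = A.up ∧ B.lo = A.lo

/-- Rule `w↓-c↑`: a weakening feeding a cocontraction is replaced by two
weakenings. -/
def RedWdCu (A B : PreFlow) : Prop :=
  ∃ v₁ v₂ e e₁ e₂,
    v₁ ∈ A.V ∧ v₂ ∈ A.V ∧ v₁ ≠ v₂ ∧
    A.η v₁ = .awDown ∧ A.η v₂ = .acUp ∧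
    e ∈ A.E ∧ e₁ ∈ A.E ∧ e₂ ∈ A.E ∧ e ≠ e₁ ∧ e ≠ e₂ ∧ e₁ ≠ e₂ ∧
    A.up e = some v₁ ∧ A.lo e = some v₂ ∧
    A.up e₁ = some v₂ ∧ A.up e₂ = some v₂ ∧
    B.V = A.V ∧ B.E = A.E.erase e ∧
    B.η = Function.update A.η v₂ .awDown ∧
    B.up = Function.update A.up e₁ (some v₁) ∧
    B.lo = A.lo

/-- Rule `c↓-w↑` (dual of `w↓-c↑`). -/
def RedCdWu (A B : PreFlow) : Prop :=
  ∃ v₁ v₂ e e₁ e₂,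
    v₁ ∈ A.V ∧ v₂ ∈ A.V ∧ v₁ ≠ v₂ ∧
    A.η v₁ = .awUp ∧ A.η v₂ = .acDown ∧
    e ∈ A.E ∧ e₁ ∈ A.E ∧ e₂ ∈ A.E ∧ e ≠ e₁ ∧ e ≠ e₂ ∧ e₁ ≠ e₂ ∧
    A.lo e = some v₁ ∧ A.up e = some v₂ ∧
    A.lo e₁ = some v₂ ∧ A.lo e₂ = some v₂ ∧
    B.V = A.V ∧ B.E = A.E.erase e ∧
    B.η = Function.update A.η v₂ .awUp ∧
    B.lo = Function.update A.lo e₁ (some v₁) ∧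
    B.up = A.up

/-- Rule `c↓-i↑`: a contraction whose output edge enters a cointeraction is
replaced by a cocontraction on the other cointeraction edge followed by two
cointeractions. -/
def RedCdIu (A B : PreFlow) : Prop :=
  ∃ v₁ v₂ v₃ e e₁ e₂ e₃ g₁ g₂,
    v₁ ∈ A.V ∧ v₂ ∈ A.V ∧ v₁ ≠ v₂ ∧ v₃ ∉ A.V ∧
    A.η v₁ = .acDown ∧ A.η v₂ = .aiUp ∧
    e ∈ A.E ∧ e₁ ∈ A.E ∧ e₂ ∈ A.E ∧ e₃ ∈ A.E ∧
    e ≠ e₁ ∧ e ≠ e₂ ∧ e ≠ e₃ ∧ e₁ ≠ e₂ ∧ e₁ ≠ e₃ ∧ e₂ ≠ e₃ ∧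
    g₁ ∉ A.E ∧ g₂ ∉ A.E ∧ g₁ ≠ g₂ ∧
    A.lo e₁ = some v₁ ∧ A.lo e₂ = some v₁ ∧
    A.up e = some v₁ ∧ A.lo e = some v₂ ∧ A.lo e₃ = some v₂ ∧
    B.V = insert v₃ A.V ∧
    B.E = insert g₁ (insert g₂ (A.E.erase e)) ∧
    B.η = Function.update (Function.update A.η v₁ .acUp) v₃ .aiUp ∧
    B.up = Function.update (Function.update A.up g₁ (some v₁)) g₂ (some v₁) ∧
    B.lo = Function.update (Function.update (Function.update
      (Function.update (Function.update A.lo e₁ (some v₂)) e₂ (some v₃))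
        e₃ (some v₁)) g₁ (some v₂)) g₂ (some v₃)

/-- Rule `i↓-c↑` (dual of `c↓-i↑`). -/
def RedIdCu (A B : PreFlow) : Prop :=
  ∃ v₁ v₂ v₃ e e₁ e₂ e₃ g₁ g₂,
    v₁ ∈ A.V ∧ v₂ ∈ A.V ∧ v₁ ≠ v₂ ∧ v₃ ∉ A.V ∧
    A.η v₁ = .acUp ∧ A.η v₂ = .aiDown ∧
    e ∈ A.E ∧ e₁ ∈ A.E ∧ e₂ ∈ A.E ∧ e₃ ∈ A.E ∧
    e ≠ e₁ ∧ e ≠ e₂ ∧ e ≠ e₃ ∧ e₁ ≠ e₂ ∧ e₁ ≠ e₃ ∧ e₂ ≠ e₃ ∧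
    g₁ ∉ A.E ∧ g₂ ∉ A.E ∧ g₁ ≠ g₂ ∧
    A.up e₁ = some v₁ ∧ A.up e₂ = some v₁ ∧
    A.lo e = some v₁ ∧ A.up e = some v₂ ∧ A.up e₃ = some v₂ ∧
    B.V = insert v₃ A.V ∧
    B.E = insert g₁ (insert g₂ (A.E.erase e)) ∧
    B.η = Function.update (Function.update A.η v₁ .acDown) v₃ .aiDown ∧
    B.lo = Function.update (Function.update A.lo g₁ (some v₁)) g₂ (some v₁) ∧
    B.up = Function.update (Function.update (Function.update
      (Function.update (Function.update A.up e₁ (some v₂)) e₂ (some v₃))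
        e₃ (some v₁)) g₁ (some v₂)) g₂ (some v₃)

/-- Rule `c↓-c↑`: a contraction whose output enters a cocontraction is
replaced by two cocontractions above two contractions, crosswise connected. -/
def RedCdCu (A B : PreFlow) : Prop :=
  ∃ v₁ v₂ v₃ v₄ e e₁ e₂ e₃ e₄ g₁₁ g₁₂ g₂₁ g₂₂,
    v₁ ∈ A.V ∧ v₂ ∈ A.V ∧ v₁ ≠ v₂ ∧
    v₃ ∉ A.V ∧ v₄ ∉ A.V ∧ v₃ ≠ v₄ ∧
    A.η v₁ = .acDown ∧ A.η v₂ = .acUp ∧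
    e ∈ A.E ∧ e₁ ∈ A.E ∧ e₂ ∈ A.E ∧ e₃ ∈ A.E ∧ e₄ ∈ A.E ∧
    e ≠ e₁ ∧ e ≠ e₂ ∧ e ≠ e₃ ∧ e ≠ e₄ ∧
    e₁ ≠ e₂ ∧ e₁ ≠ e₃ ∧ e₁ ≠ e₄ ∧ e₂ ≠ e₃ ∧ e₂ ≠ e₄ ∧ e₃ ≠ e₄ ∧
    g₁₁ ∉ A.E ∧ g₁₂ ∉ A.E ∧ g₂₁ ∉ A.E ∧ g₂₂ ∉ A.E ∧
    g₁₁ ≠ g₁₂ ∧ g₁₁ ≠ g₂₁ ∧ g₁₁ ≠ g₂₂ ∧ g₁₂ ≠ g₂₁ ∧ g₁₂ ≠ g₂₂ ∧ g₂₁ ≠ g₂₂ ∧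
    A.lo e₁ = some v₁ ∧ A.lo e₂ = some v₁ ∧ A.up e = some v₁ ∧
    A.lo e = some v₂ ∧ A.up e₃ = some v₂ ∧ A.up e₄ = some v₂ ∧
    B.V = insert v₃ (insert v₄ A.V) ∧
    B.E = insert g₁₁ (insert g₁₂ (insert g₂₁ (insert g₂₂ (A.E.erase e)))) ∧
    B.η = Function.update (Function.update (Function.update
      (Function.update A.η v₁ .acUp) v₂ .acUp) v₃ .acDown) v₄ .acDown ∧
    B.up = Function.update (Function.update (Function.update
      (Function.update (Function.update (Function.update A.up
        e₃ (some v₃)) e₄ (some v₄)) g₁₁ (some v₁)) g₁₂ (some v₁))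
          g₂₁ (some v₂)) g₂₂ (some v₂) ∧
    B.lo = Function.update (Function.update (Function.update
      (Function.update (Function.update A.lo e₂ (some v₂)) g₁₁ (some v₃))
        g₁₂ (some v₄)) g₂₁ (some v₃)) g₂₂ (some v₄)

/-- One step of the flow rewriting system `w`. -/
def StepW (A B : PreFlow) : Prop :=
  RedWdCd A B ∨ RedCuWu A B ∨ RedWdIu A B ∨ RedIdWu A B ∨
  RedWdWu A B ∨ RedWdCu A B ∨ RedCdWu A B

/-- One step of the flow rewriting system `c`. -/
def StepC (A B : PreFlow) : Prop :=
  RedCdIu A B ∨ RedIdCu A B ∨ RedCdCu A B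

/-- `A` is normal for the flow rewriting system `w`. -/
def NormalW (A : PreFlow) : Prop := ¬ ∃ B, StepW A B

/-- `A` is normal for the flow rewriting system `c`. -/
def NormalC (A : PreFlow) : Prop := ¬ ∃ B, StepC A B

/-! ### Flow isomorphisms. -/

structure FlowIso (A B : PreFlow) : Type where
  vmap : ℕ → ℕ
  emap : ℕ → ℕ
  vbij : Set.BijOn vmap (A.V : Set ℕ) (B.V : Set ℕ)
  ebij : Set.BijOn emap (A.E : Set ℕ) (B.E : Set ℕ)
  lab : ∀ v ∈ A.V, B.η (vmap v) = A.η v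
  upc : ∀ e ∈ A.E, B.up (emap e) = (A.up e).map vmap
  loc : ∀ e ∈ A.E, B.lo (emap e) = (A.lo e).map vmap

/-! ### The global reduction `→se` (elimination of a simple edge). -/

/-- The flow obtained from `B` by eliminating the simple edge `e0` between
the interaction `vi` and the cointeraction `vc` (with `e2` the other lower
edge of `vi` and `e3` the other upper edge of `vc`): two copies (tags `0`,
hat, the lower one, and `1`, tilde, the upper one) of the remaining flow are
glued by identifying the hat copy of `e2` with the tilde copy of `e3`; a
weakening (vertex `(2,0)`) is placed above the tilde copy of `e2`, a
coweakening (vertex `(2,1)`) below the hat copy of `e3`; each upper edge `ε`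
of `B` gives a cocontraction (vertex `(3,ε)`, with a new upper edge `(3,ε)`)
joining the two copies of `ε`, and dually each lower edge `ε'` of `B` gives
a contraction (vertex `(4,ε')`, with a new lower edge `(4,ε')`). -/
def seFlow (B : PreFlow) (vi vc e0 e2 e3 : ℕ) : PreFlow :=
  { V := ((B.V.erase vi).erase vc).image (Nat.pair 0) ∪
         ((B.V.erase vi).erase vc).image (Nat.pair 1) ∪
         {Nat.pair 2 0, Nat.pair 2 1} ∪
         (B.E.filter (fun e => B.up e = none)).image (Nat.pair 3) ∪
         (B.E.filter (fun e => B.lo e = none)).image (Nat.pair 4),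
    E := (B.E.erase e0).image (Nat.pair 0) ∪
         (B.E.erase e0).image (fun e => if e = e3 then Nat.pair 0 e2 else Nat.pair 1 e) ∪
         (B.E.filter (fun e => B.up e = none)).image (Nat.pair 3) ∪
         (B.E.filter (fun e => B.lo e = none)).image (Nat.pair 4),
    η := fun x =>
      if (Nat.unpair x).1 = 2 then
        (if (Nat.unpair x).2 = 0 then FlowLabel.awDown else FlowLabel.awUp)
      else if (Nat.unpair x).1 = 3 then FlowLabel.acUp
      else if (Nat.unpair x).1 = 4 then FlowLabel.acDown
      else B.η (Nat.unpair x).2,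
    up := fun x =>
      let t := (Nat.unpair x).1
      let y := (Nat.unpair x).2
      if t = 0 then
        (if y = e2 then
          (match B.up e3 with
           | some v => some (Nat.pair 1 v)
           | none => some (Nat.pair 3 e3))
        else
          (match B.up y with
           | some v => some (Nat.pair 0 v)
           | none => some (Nat.pair 3 y)))
      else if t = 1 then
        (if y = e2 then some (Nat.pair 2 0)
        else
          (match B.up y with
           | some v => some (Nat.pair 1 v)
           | none => some (Nat.pair 3 y)))
      else if t = 3 then none
      else some (Nat.pair 4 y),
    lo := fun x =>
      let t := (Nat.unpair x).1
      let y := (Nat.unpair x).2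
      if t = 0 then
        (if y = e2 then
          (match B.lo e2 with
           | some v => some (Nat.pair 0 v)
           | none => some (Nat.pair 4 e2))
        else if y = e3 then some (Nat.pair 2 1)
        else
          (match B.lo y with
           | some v => some (Nat.pair 0 v)
           | none => some (Nat.pair 4 y)))
      else if t = 1 then
        (match B.lo y with
         | some v => some (Nat.pair 1 v)
         | none => some (Nat.pair 4 y))
      else if t = 3 then some (Nat.pair 3 y)
      else none }

/-- The reduction `→se`: elimination of a simple edge (up to flow
isomorphism). -/
def RedSE (B C : PreFlow) : Prop :=
  ∃ vi vc e0 e2 e3,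
    vi ∈ B.V ∧ vc ∈ B.V ∧ vi ≠ vc ∧
    B.η vi = .aiDown ∧ B.η vc = .aiUp ∧
    e0 ∈ B.E ∧ e2 ∈ B.E ∧ e3 ∈ B.E ∧
    e0 ≠ e2 ∧ e0 ≠ e3 ∧ e2 ≠ e3 ∧
    B.up e0 = some vi ∧ B.lo e0 = some vc ∧
    B.up e2 = some vi ∧ B.lo e3 = some vc ∧
    Nonempty (FlowIso C (seFlow B vi vc e0 e2 e3))

/-! ### The atomic flow associated with a derivation. -/

/-- Correspondence conditions for a linear rule applied at position `q`:
for each pair `(c₁, c₂)` in `cs`, occurrences at `q ++ c₁ ++ p` in the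
conclusion (formula `i+1`) are traced to occurrences at `q ++ c₂ ++ p` in
the premiss (formula `i`). -/
def corrCond (f : ℕ → List Bool → ℕ) (i : ℕ) (q : List Bool) (ψ : Formula)
    (cs : List (List Bool × List Bool)) : Prop :=
  ∀ c ∈ cs, ∀ p : List Bool, ψ.IsOcc (q ++ c.1 ++ p) →
    f (i + 1) (q ++ c.1 ++ p) = f i (q ++ c.2 ++ p)

/-- The tracing conditions for one inference step: occurrences in the
context are traced to the same edge, and the active occurrences of a
structural rule are related to the edges of the vertex `v` as prescribed by
its label, while the active occurrences of logical and `=` steps are traced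
to the same edges under the canonical correspondence. -/
def stepCond (A : PreFlow) (f : ℕ → List Bool → ℕ) (v : ℕ) (i : ℕ)
    (r : RuleName) (q : List Bool) (φ ψ : Formula) : Prop :=
  (∀ p, ¬ (q <+: p) → φ.IsOcc p → f (i + 1) p = f i p) ∧
  match r with
  | .aiDown =>
      A.η v = .aiDown ∧
      A.up (f (i + 1) (q ++ [false])) = some v ∧
      A.up (f (i + 1) (q ++ [true])) = some v ∧
      f (i + 1) (q ++ [false]) ≠ f (i + 1) (q ++ [true])
  | .aiUp =>
      A.η v = .aiUp ∧
      A.lo (f i (q ++ [false])) = some v ∧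
      A.lo (f i (q ++ [true])) = some v ∧
      f i (q ++ [false]) ≠ f i (q ++ [true])
  | .awDown => A.η v = .awDown ∧ A.up (f (i + 1) q) = some v
  | .awUp => A.η v = .awUp ∧ A.lo (f i q) = some v
  | .acDown =>
      A.η v = .acDown ∧
      A.lo (f i (q ++ [false])) = some v ∧
      A.lo (f i (q ++ [true])) = some v ∧
      A.up (f (i + 1) q) = some v ∧
      f i (q ++ [false]) ≠ f i (q ++ [true])
  | .acUp =>
      A.η v = .acUp ∧
      A.lo (f i q) = some v ∧
      A.up (f (i + 1) (q ++ [false])) = some v ∧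
      A.up (f (i + 1) (q ++ [true])) = some v ∧
      f (i + 1) (q ++ [false]) ≠ f (i + 1) (q ++ [true])
  | .s => corrCond f i q ψ
      [([false, false], [false]), ([false, true], [true, false]),
       ([true], [true, true])]
  | .m => corrCond f i q ψ
      [([false, false], [false, false]), ([true, false], [false, true]),
       ([false, true], [true, false]), ([true, true], [true, true])]
  | .eqOrComm => corrCond f i q ψ [([false], [true]), ([true], [false])]
  | .eqAndComm => corrCond f i q ψ [([false], [true]), ([true], [false])]
  | .eqOrAssocL => corrCond f i q ψ
      [([false], [false, false]), ([true, false], [false, true]),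
       ([true, true], [true])]
  | .eqOrAssocR => corrCond f i q ψ
      [([false, false], [false]), ([false, true], [true, false]),
       ([true], [true, true])]
  | .eqAndAssocL => corrCond f i q ψ
      [([false], [false, false]), ([true, false], [false, true]),
       ([true, true], [true])]
  | .eqAndAssocR => corrCond f i q ψ
      [([false, false], [false]), ([false, true], [true, false]),
       ([true], [true, true])]
  | .eqOrUnitDel => corrCond f i q ψ [([], [false])]
  | .eqOrUnitAdd => corrCond f i q ψ [([false], [])]
  | .eqAndUnitDel => corrCond f i q ψ [([], [false])]
  | .eqAndUnitAdd => corrCond f i q ψ [([false], [])]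
  | .eqTTDel => True
  | .eqTTAdd => True
  | .eqFFDel => True
  | .eqFFAdd => True

/-- `A` is the atomic flow associated with the derivation `Φ`, where `f`
maps each atom occurrence (formula index, position) of `Φ` to an edge of
`A`, and `g` assigns to each structural inference step its vertex. -/
def IsAssocFlow (Φ : Deriv) (A : PreFlow) (f : ℕ → List Bool → ℕ)
    (g : ℕ → ℕ) : Prop :=
  Φ.WF ∧ A.IsFlow ∧
  (∀ i p, i < Φ.nf → (Φ.fml i).IsOcc p → f i p ∈ A.E) ∧
  (∀ e ∈ A.E, ∃ i p, i < Φ.nf ∧ (Φ.fml i).IsOcc p ∧ f i p = e) ∧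
  (∀ i p p', i < Φ.nf → (Φ.fml i).IsOcc p → (Φ.fml i).IsOcc p' →
    f i p = f i p' → p = p') ∧
  (∀ p, (Φ.fml 0).IsOcc p → A.up (f 0 p) = none) ∧
  (∀ p, (Φ.fml Φ.steps.length).IsOcc p → A.lo (f Φ.steps.length p) = none) ∧
  (∀ i, i < Φ.steps.length → (Φ.stepAt i).1.isStructural = true → g i ∈ A.V) ∧
  (∀ v ∈ A.V, ∃ i, i < Φ.steps.length ∧
    (Φ.stepAt i).1.isStructural = true ∧ g i = v) ∧
  (∀ i j, i < Φ.steps.length → j < Φ.steps.length →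
    (Φ.stepAt i).1.isStructural = true → (Φ.stepAt j).1.isStructural = true →
    g i = g j → i = j) ∧
  (∀ i, i < Φ.steps.length →
    stepCond A f (g i) i (Φ.stepAt i).1 (Φ.stepAt i).2.1
      (Φ.fml i) (Φ.fml (i + 1)))

/-! ### Streamlining. -/

/-- No path from an interaction or weakening vertex to a cointeraction or
coweakening vertex. -/
def NoIWPath (A : PreFlow) : Prop :=
  ¬ ∃ v v' l, v ∈ A.V ∧ v' ∈ A.V ∧
      (A.η v = .aiDown ∨ A.η v = .awDown) ∧
      (A.η v' = .aiUp ∨ A.η v' = .awUp) ∧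
      IsPath A (.ver v) (.ver v') l

/-- `Φ` is a streamlined derivation. -/
def Streamlined (Φ : Deriv) : Prop :=
  ∃ A f g, IsAssocFlow Φ A f g ∧ NoIWPath A

/-- `Φ` is a super-streamlined derivation. -/
def SuperStreamlined (Φ : Deriv) : Prop :=
  ∃ A f g, IsAssocFlow Φ A f g ∧ NoIWPath A ∧ NormalW A

/-- `Φ` is a hyper-streamlined derivation. -/
def HyperStreamlined (Φ : Deriv) : Prop :=
  ∃ A f g, IsAssocFlow Φ A f g ∧ NoIWPath A ∧ NormalW A ∧ NormalC A

end AF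

namespace AF

theorem stepW_card_lt {A B : PreFlow} (h : StepW A B) :
    B.E.card < A.E.card := by
  rcases h with h | h | h | h | h | h | h
  · obtain ⟨v₁, v₂, e, e₂, e₃, _, _, _, _, _, he, _, _, _, _, _, _, _, _, _, _,
      hE, _⟩ := h
    rw [hE]
    calc ((A.E.erase e).erase e₃).card ≤ (A.E.erase e).card :=
          Finset.card_erase_le
      _ < A.E.card := Finset.card_erase_lt_of_mem he
  · obtain ⟨v₁, v₂, e, e₂, e₃, _, _, _, _, _, he, _, _, _, _, _, _, _, _, _, _,
      hE, _⟩ := h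
    rw [hE]
    calc ((A.E.erase e).erase e₃).card ≤ (A.E.erase e).card :=
          Finset.card_erase_le
      _ < A.E.card := Finset.card_erase_lt_of_mem he
  · obtain ⟨v₁, v₂, e, e₂, _, _, _, _, _, he, _, _, _, _, _, _, hE, _⟩ := h
    rw [hE]; exact Finset.card_erase_lt_of_mem he
  · obtain ⟨v₁, v₂, e, e₂, _, _, _, _, _, he, _, _, _, _, _, _, hE, _⟩ := h
    rw [hE]; exact Finset.card_erase_lt_of_mem he
  · obtain ⟨v₁, v₂, e, _, _, _, _, _, he, _, _, _, hE, _⟩ := h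
    rw [hE]; exact Finset.card_erase_lt_of_mem he
  · obtain ⟨v₁, v₂, e, e₁, e₂, _, _, _, _, _, he, _, _, _, _, _, _, _, _, _, _,
      hE, _⟩ := h
    rw [hE]; exact Finset.card_erase_lt_of_mem he
  · obtain ⟨v₁, v₂, e, e₁, e₂, _, _, _, _, _, he, _, _, _, _, _, _, _, _, _, _,
      hE, _⟩ := h
    rw [hE]; exact Finset.card_erase_lt_of_mem he

/-- The flow rewriting system `w` is terminating: there is
no infinite chain of atomic flows `A₁ →w A₂ →w A₃ →w ⋯`. -/
theorem statement_7 :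
    ¬ ∃ A : ℕ → PreFlow, (∀ n, (A n).IsFlow) ∧
        ∀ n, StepW (A n) (A (n + 1)) := by
  rintro ⟨A, -, hstep⟩
  have : ∀ n, ((A n).E.card : ℕ) > (A (n + 1)).E.card :=
    fun n => stepW_card_lt (hstep n)
  have hle : ∀ n, (A n).E.card + n ≤ (A 0).E.card := by
    intro n
    induction n with
    | zero => simp
    | succ k ih => have := this k; omega
  exact absurd (hle ((A 0).E.card + 1)) (by omega)

end AF
end

section
/- If an atomic flow A is cycle-free and A →_w* B, then B is cycle-free. -/
set_option linter.unusedVariables false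

/-!
Each rule of `w` either erases a (co)weakening together with its edge, or merges two
consecutive edges through the vertex it removes or relabels as a (co)weakening. So every edge
of the reduct `B` is realised in `A` as a downward chain of one or two edges, distinct edges
by disjoint chains, and every interaction or cointeraction vertex of `B` is one of `A` with
the same label. Replacing each edge by its chain turns an ai-path of `B` into an ai-path of
`A` between the same ends, repeating no edge if the original repeats none (ai-joins stay legal
since the two chains met at a vertex are disjoint), so an ai-cycle of `B` yields one of `A`.
-/

namespace AF

def Linked (F : PreFlow) (e e' : ℕ) : Prop :=
  ∃ v ∈ F.V, F.lo e = some v ∧ F.up e' = some v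

lemma srcOK_congr {F G : PreFlow} {e x : ℕ} (h : F.up e = G.up x) (ν : VPt) :
    srcOK F ν e ↔ srcOK G ν x := by
  cases ν <;> simp [srcOK, h]

lemma tgtOK_congr {F G : PreFlow} {e x : ℕ} (h : F.lo e = G.lo x) (ν : VPt) :
    tgtOK F ν e ↔ tgtOK G ν x := by
  cases ν <;> simp [tgtOK, h]

lemma isDownPath_iff {F : PreFlow} {ν ν' : VPt} {l : List ℕ} :
    IsDownPath F ν ν' l ↔ l ≠ [] ∧ (∀ e ∈ l, e ∈ F.E) ∧ l.IsChain (Linked F) ∧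
      (∀ e ∈ l.head?, srcOK F ν e) ∧ (∀ e ∈ l.getLast?, tgtOK F ν' e) := by
  have hchain : (∀ i, i + 1 < l.length → ∃ v ∈ F.V,
      F.lo (l.getD i 0) = some v ∧ F.up (l.getD (i + 1) 0) = some v) ↔
      l.IsChain (Linked F) := by
    rw [List.isChain_iff_getElem]
    refine forall_congr' fun i => forall_congr' fun hi => ?_
    rw [List.getD_eq_getElem _ _ (Nat.lt_of_succ_lt hi), List.getD_eq_getElem _ _ hi, Linked]
  unfold IsDownPath
  rw [hchain]
  by_cases hl : l = []
  · simp [hl]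
  · have hlen : 0 < l.length := List.length_pos_iff.mpr hl
    rw [List.head?_eq_some_head hl, List.getLast?_eq_some_getLast hl,
      List.getD_eq_getElem _ _ hlen, List.getD_eq_getElem _ _ (Nat.sub_lt hlen one_pos),
      ← List.head_eq_getElem hl, ← List.getLast_eq_getElem hl]
    simp [hl]

lemma AIPath.mem_E {F : PreFlow} {ν ν' : VPt} {l : List ℕ} (h : AIPath F ν ν' l) :
    ∀ e ∈ l, e ∈ F.E := by
  induction h with
  | single hp =>
    rcases hp with hp | hp
    · exact (isDownPath_iff.mp hp).2.1
    · simpa using (isDownPath_iff.mp hp).2.1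
  | join _ _ _ _ _ ih₁ ih₂ =>
    intro x hx
    rcases List.mem_append.mp hx with hx | hx
    exacts [ih₁ x hx, ih₂ x hx]

structure ChainEmbedding (B A : PreFlow) : Type where
  ch : ℕ → List ℕ
  ch_ne_nil : ∀ x ∈ B.E, ch x ≠ []
  ch_subset : ∀ x ∈ B.E, ∀ e ∈ ch x, e ∈ A.E
  ch_isChain : ∀ x ∈ B.E, (ch x).IsChain (Linked A)
  up_head : ∀ x ∈ B.E, ∀ e ∈ (ch x).head?, A.up e = B.up x
  lo_getLast : ∀ x ∈ B.E, ∀ e ∈ (ch x).getLast?, A.lo e = B.lo x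
  ch_nodup : ∀ x ∈ B.E, (ch x).Nodup
  ch_disjoint : ∀ x ∈ B.E, ∀ y ∈ B.E, x ≠ y → (ch x).Disjoint (ch y)
  V_subset : B.V ⊆ A.V
  η_eq_of_isAI : ∀ v ∈ B.V, (B.η v = .aiDown ∨ B.η v = .aiUp) → A.η v = B.η v

namespace ChainEmbedding

variable {A B : PreFlow} (S : ChainEmbedding B A)

lemma linked {a b : ℕ} (ha : a ∈ B.E) (hb : b ∈ B.E) (h : Linked B a b) :
    ∀ x ∈ (S.ch a).getLast?, ∀ y ∈ (S.ch b).head?, Linked A x y := by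
  obtain ⟨v, hv, hlo, hup⟩ := h
  intro x hx y hy
  exact ⟨v, S.V_subset hv, (S.lo_getLast a ha x hx).trans hlo,
    (S.up_head b hb y hy).trans hup⟩

lemma isChain_flatMap {l : List ℕ} (hl : ∀ x ∈ l, x ∈ B.E) (h : l.IsChain (Linked B)) :
    (l.flatMap S.ch).IsChain (Linked A) := by
  have hnil : [] ∉ l.map S.ch := by
    simpa using fun x hx => (S.ch_ne_nil x (hl x hx)).symm
  rw [List.flatMap, List.isChain_flatten hnil, List.isChain_map]
  refine ⟨by simpa using fun x hx => S.ch_isChain x (hl x hx), ?_⟩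
  exact h.imp_of_mem_imp fun a b ha hb hab => S.linked (hl a ha) (hl b hb) hab

lemma head?_flatMap_cons {a : ℕ} (ha : a ∈ B.E) (t : List ℕ) :
    ((a :: t).flatMap S.ch).head? = (S.ch a).head? := by
  rw [List.flatMap_cons, List.head?_append_of_ne_nil _ (S.ch_ne_nil a ha)]

lemma getLast?_flatMap_concat {a : ℕ} (ha : a ∈ B.E) (t : List ℕ) :
    ((t ++ [a]).flatMap S.ch).getLast? = (S.ch a).getLast? := by
  rw [List.flatMap_append, List.flatMap_singleton,
    List.getLast?_append_of_ne_nil _ (S.ch_ne_nil a ha)]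

lemma nodup_flatMap {l : List ℕ} (hl : ∀ x ∈ l, x ∈ B.E) (hnd : l.Nodup) :
    (l.flatMap S.ch).Nodup :=
  List.nodup_flatMap.mpr ⟨fun x hx => S.ch_nodup x (hl x hx),
    hnd.pairwise_of_forall_ne fun x hx y hy hxy => S.ch_disjoint x (hl x hx) y (hl y hy) hxy⟩

/-- Reversed paths traverse the chains backwards, so a lift `m` of `l` is only determined up
to permutation; its two ends are tracked for the join condition at ai-vertices. -/
def IsLift (l m : List ℕ) : Prop :=
  m.Perm (l.flatMap S.ch) ∧ (∃ x ∈ l.head?, ∃ a ∈ m.head?, a ∈ S.ch x) ∧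
    (∃ x ∈ l.getLast?, ∃ a ∈ m.getLast?, a ∈ S.ch x)

lemma IsLift.reverse {S : ChainEmbedding B A} {l m : List ℕ} (h : S.IsLift l m) :
    S.IsLift l.reverse m.reverse := by
  obtain ⟨hperm, hhead, hlast⟩ := h
  refine ⟨(List.reverse_perm m).trans (hperm.trans ?_), ?_, ?_⟩
  · exact ((List.reverse_perm l).flatMap_right S.ch).symm
  · simpa using hlast
  · simpa using hhead

lemma IsLift.append {S : ChainEmbedding B A} {l₁ l₂ m₁ m₂ : List ℕ} (h₁ : S.IsLift l₁ m₁)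
    (h₂ : S.IsLift l₂ m₂) : S.IsLift (l₁ ++ l₂) (m₁ ++ m₂) := by
  obtain ⟨hperm₁, ⟨x, hx, a, ha, hax⟩, -⟩ := h₁
  obtain ⟨hperm₂, -, ⟨y, hy, b, hb, hby⟩⟩ := h₂
  refine ⟨List.flatMap_append ▸ hperm₁.append hperm₂, ⟨x, ?_, a, ?_, hax⟩,
    ⟨y, ?_, b, ?_, hby⟩⟩ <;> simp_all [List.head?_append, List.getLast?_append]

lemma isDownPath_flatMap {ν ν' : VPt} {l : List ℕ} (h : IsDownPath B ν ν' l) :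
    IsDownPath A ν ν' (l.flatMap S.ch) := by
  obtain ⟨hne, hE, hchain, hsrc, htgt⟩ := isDownPath_iff.mp h
  refine isDownPath_iff.mpr ⟨?_, ?_, S.isChain_flatMap hE hchain, ?_, ?_⟩
  · obtain ⟨a, t, rfl⟩ := List.exists_cons_of_ne_nil hne
    simp [List.flatMap_cons, S.ch_ne_nil a (hE a (by simp))]
  · intro e he
    obtain ⟨x, hx, hex⟩ := List.mem_flatMap.mp he
    exact S.ch_subset x (hE x hx) e hex
  · obtain ⟨a, t, rfl⟩ := List.exists_cons_of_ne_nil hne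
    rw [S.head?_flatMap_cons (hE a (by simp))]
    intro e he
    exact (srcOK_congr (S.up_head a (hE a (by simp)) e he) ν).mpr (hsrc a (by simp))
  · rw [← List.dropLast_append_getLast hne] at hE htgt ⊢
    rw [S.getLast?_flatMap_concat (hE _ (by simp))]
    intro e he
    exact (tgtOK_congr (S.lo_getLast _ (hE _ (by simp)) e he) ν').mpr (htgt _ (by simp))

lemma isLift_flatMap {ν ν' : VPt} {l : List ℕ} (h : IsDownPath B ν ν' l) :
    S.IsLift l (l.flatMap S.ch) := by
  obtain ⟨hne, hE, -⟩ := isDownPath_iff.mp h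
  refine ⟨List.Perm.refl _, ?_, ?_⟩
  · obtain ⟨a, t, rfl⟩ := List.exists_cons_of_ne_nil hne
    have hch := S.ch_ne_nil a (hE a (by simp))
    refine ⟨a, rfl, (S.ch a).head hch, ?_, List.head_mem hch⟩
    rw [S.head?_flatMap_cons (hE a (by simp)), List.head?_eq_some_head hch]
    rfl
  · rw [← List.dropLast_append_getLast hne] at hE ⊢
    have hch := S.ch_ne_nil (l.getLast hne) (hE _ (by simp))
    refine ⟨l.getLast hne, by simp, (S.ch _).getLast hch, ?_, List.getLast_mem hch⟩
    rw [S.getLast?_flatMap_concat (hE _ (by simp)), List.getLast?_eq_some_getLast hch]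
    rfl

lemma exists_path {ν ν' : VPt} {l : List ℕ} (h : IsPath B ν ν' l) :
    ∃ m, IsPath A ν ν' m ∧ S.IsLift l m := by
  rcases h with h | h
  · exact ⟨_, Or.inl (S.isDownPath_flatMap h), S.isLift_flatMap h⟩
  · refine ⟨(l.reverse.flatMap S.ch).reverse, Or.inr (by simpa using S.isDownPath_flatMap h), ?_⟩
    simpa using (S.isLift_flatMap h).reverse

lemma exists_aiPath {ν ν' : VPt} {l : List ℕ} (h : AIPath B ν ν' l) :
    ∃ m, AIPath A ν ν' m ∧ S.IsLift l m := by
  induction h with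
  | single hp =>
    obtain ⟨m, hm, hlift⟩ := S.exists_path hp
    exact ⟨m, .single hm, hlift⟩
  | @join ν ν' v l₁ l₂ e e' hv hη h₁ h₂ hee' ih₁ ih₂ =>
    obtain ⟨m₁, hm₁, hlift₁⟩ := ih₁
    obtain ⟨m₂, hm₂, hlift₂⟩ := ih₂
    obtain ⟨a, ha, hae⟩ : ∃ a ∈ m₁.getLast?, a ∈ S.ch e := by simpa using hlift₁.2.2
    obtain ⟨b, hb, hbe'⟩ : ∃ b ∈ m₂.head?, b ∈ S.ch e' := by simpa using hlift₂.2.1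
    have hab : a ≠ b := fun hab => S.ch_disjoint e (h₁.mem_E e (by simp))
      e' (h₂.mem_E e' (by simp)) hee' hae (hab ▸ hbe')
    rw [← List.dropLast_append_getLast? a ha] at hm₁
    rw [← List.cons_head?_tail hb] at hm₂
    have hjoin := AIPath.join (S.V_subset hv) (S.η_eq_of_isAI v hv hη ▸ hη) hm₁ hm₂ hab
    rw [List.dropLast_append_getLast? a ha, List.cons_head?_tail hb] at hjoin
    exact ⟨m₁ ++ m₂, hjoin, hlift₁.append hlift₂⟩

end ChainEmbedding

theorem ChainEmbedding.cycleFree {A B : PreFlow} (S : ChainEmbedding B A) (hA : CycleFree A) :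
    CycleFree B := by
  rintro ⟨v, l, hv, hl, hnd⟩
  obtain ⟨m, hm, hperm, -⟩ := S.exists_aiPath hl
  exact hA ⟨v, m, S.V_subset hv, hm, hperm.nodup_iff.mpr (S.nodup_flatMap hl.mem_E hnd)⟩

section

variable {A B : PreFlow}

def ChainEmbedding.ofSubset (hE : B.E ⊆ A.E) (hup : ∀ x ∈ B.E, A.up x = B.up x)
    (hlo : ∀ x ∈ B.E, A.lo x = B.lo x) (hV : B.V ⊆ A.V)
    (hη : ∀ v ∈ B.V, (B.η v = .aiDown ∨ B.η v = .aiUp) → A.η v = B.η v) :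
    ChainEmbedding B A where
  ch x := [x]
  ch_ne_nil _ _ := List.cons_ne_nil _ _
  ch_subset x hx := by simpa using hE hx
  ch_isChain _ _ := List.isChain_singleton _
  up_head x hx := by simpa using hup x hx
  lo_getLast x hx := by simpa using hlo x hx
  ch_nodup _ _ := List.nodup_singleton _
  ch_disjoint _ _ _ _ hxy := by simpa using Ne.symm hxy
  V_subset := hV
  η_eq_of_isAI := hη

def ChainEmbedding.ofSubdivision (x₀ a b : ℕ) (ha : a ∈ A.E) (hb : b ∈ A.E) (hab : a ≠ b)
    (hlink : Linked A a b) (hup₀ : A.up a = B.up x₀) (hlo₀ : A.lo b = B.lo x₀)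
    (hfresh : ∀ y ∈ B.E, y ≠ x₀ → y ≠ a ∧ y ≠ b) (hE : B.E ⊆ A.E)
    (hup : ∀ x ∈ B.E, x ≠ x₀ → A.up x = B.up x) (hlo : ∀ x ∈ B.E, x ≠ x₀ → A.lo x = B.lo x)
    (hV : B.V ⊆ A.V) (hη : ∀ v ∈ B.V, (B.η v = .aiDown ∨ B.η v = .aiUp) → A.η v = B.η v) :
    ChainEmbedding B A where
  ch x := if x = x₀ then [a, b] else [x]
  ch_ne_nil x _ := by split_ifs <;> simp
  ch_subset x hx := by split_ifs <;> simp [ha, hb, hE hx]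
  ch_isChain x _ := by split_ifs <;> simp [hlink]
  up_head x hx := by split_ifs with h <;> simp [h, hup₀, hup x hx]
  lo_getLast x hx := by split_ifs with h <;> simp [h, hlo₀, hlo x hx]
  ch_nodup x _ := by split_ifs <;> simp [hab]
  ch_disjoint x hx y hy hxy := by split_ifs <;> simp_all [eq_comm]
  V_subset := hV
  η_eq_of_isAI := hη

lemma η_eq_of_isAI_of_update {w : ℕ} {ℓ : FlowLabel} (hℓ : ℓ = .awDown ∨ ℓ = .awUp)
    (hη : B.η = Function.update A.η w ℓ) (v : ℕ) (h : B.η v = .aiDown ∨ B.η v = .aiUp) :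
    A.η v = B.η v := by
  rw [hη] at h ⊢
  by_cases hv : v = w
  · subst hv
    rcases hℓ with rfl | rfl <;> simp at h
  · rw [Function.update_of_ne hv]

lemma RedWdCd.chainEmbedding (h : RedWdCd A B) : Nonempty (ChainEmbedding B A) := by
  obtain ⟨v₁, v₂, e, e₂, e₃, -, hv₂, -, -, -, -, he₂, he₃, -, -, he₂₃, -, -, hlo₂, hup₃,
    hV, hE, hη, hup, hlo⟩ := h
  refine ⟨.ofSubdivision e₂ e₂ e₃ he₂ he₃ he₂₃ ⟨v₂, hv₂, hlo₂, hup₃⟩ (by rw [hup])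
    (by simp [hlo]) ?_ ?_ ?_ ?_ ?_ ?_⟩ <;>
  simp_all [Finset.subset_iff]

lemma RedCuWu.chainEmbedding (h : RedCuWu A B) : Nonempty (ChainEmbedding B A) := by
  obtain ⟨v₁, v₂, e, e₂, e₃, -, hv₂, -, -, -, -, he₂, he₃, -, -, he₂₃, -, -, hup₂, hlo₃,
    hV, hE, hη, hlo, hup⟩ := h
  refine ⟨.ofSubdivision e₂ e₃ e₂ he₃ he₂ he₂₃.symm ⟨v₂, hv₂, hlo₃, hup₂⟩ (by simp [hup])
    (by rw [hlo]) ?_ ?_ ?_ ?_ ?_ ?_⟩ <;>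
  simp_all [Finset.subset_iff]

lemma RedWdIu.chainEmbedding (h : RedWdIu A B) : Nonempty (ChainEmbedding B A) := by
  obtain ⟨v₁, v₂, e, e₂, -, -, -, -, -, -, -, -, -, -, -, hV, hE, hη, hup, hlo⟩ := h
  refine ⟨.ofSubset ?_ ?_ ?_ ?_ fun v _ => η_eq_of_isAI_of_update (by simp) hη v⟩ <;>
  simp_all [Finset.subset_iff]

lemma RedIdWu.chainEmbedding (h : RedIdWu A B) : Nonempty (ChainEmbedding B A) := by
  obtain ⟨v₁, v₂, e, e₂, -, -, -, -, -, -, -, -, -, -, -, hV, hE, hη, hup, hlo⟩ := h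
  refine ⟨.ofSubset ?_ ?_ ?_ ?_ fun v _ => η_eq_of_isAI_of_update (by simp) hη v⟩ <;>
  simp_all [Finset.subset_iff]

lemma RedWdWu.chainEmbedding (h : RedWdWu A B) : Nonempty (ChainEmbedding B A) := by
  obtain ⟨v₁, v₂, e, -, -, -, -, -, -, -, -, hV, hE, hη, hup, hlo⟩ := h
  refine ⟨.ofSubset ?_ ?_ ?_ ?_ ?_⟩ <;>
  simp_all [Finset.subset_iff]

lemma RedWdCu.chainEmbedding (h : RedWdCu A B) : Nonempty (ChainEmbedding B A) := by
  obtain ⟨v₁, v₂, e, e₁, e₂, -, hv₂, -, -, -, he, he₁, -, he₁', -, -, hup, hlo, hup₁, -,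
    hV, hE, hη, hupB, hloB⟩ := h
  refine ⟨.ofSubdivision e₁ e e₁ he he₁ he₁' ⟨v₂, hv₂, hlo, hup₁⟩ (by simp [hupB, hup])
    (by rw [hloB]) ?_ ?_ ?_ ?_ ?_ fun v _ => η_eq_of_isAI_of_update (by simp) hη v⟩ <;>
  simp_all [Finset.subset_iff]

lemma RedCdWu.chainEmbedding (h : RedCdWu A B) : Nonempty (ChainEmbedding B A) := by
  obtain ⟨v₁, v₂, e, e₁, e₂, -, hv₂, -, -, -, he, he₁, -, he₁', -, -, hlo, hup, hlo₁, -,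
    hV, hE, hη, hloB, hupB⟩ := h
  refine ⟨.ofSubdivision e₁ e₁ e he₁ he he₁'.symm ⟨v₂, hv₂, hlo₁, hup⟩ (by rw [hupB])
    (by simp [hloB, hlo]) ?_ ?_ ?_ ?_ ?_ fun v _ => η_eq_of_isAI_of_update (by simp) hη v⟩ <;>
  simp_all [Finset.subset_iff]

lemma StepW.chainEmbedding (h : StepW A B) : Nonempty (ChainEmbedding B A) := by
  rcases h with h | h | h | h | h | h | h <;> exact h.chainEmbedding

end

theorem statement_8_general (A B : PreFlow) (hcf : CycleFree A)
    (h : Relation.ReflTransGen StepW A B) : CycleFree B := by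
  induction h with
  | refl => exact hcf
  | tail _ hstep ih => exact hstep.chainEmbedding.elim fun S => S.cycleFree ih

/-- If an atomic flow `A` is cycle-free and `A →w* B`,
then `B` is cycle-free. -/
theorem statement_8 (A B : PreFlow) (hA : A.IsFlow) (hcf : CycleFree A)
    (h : Relation.ReflTransGen StepW A B) : CycleFree B :=
  statement_8_general A B hcf h

end AF
end

section
/- If an atomic flow is normal for the flow rewriting system c, then all of its ai-paths are clean paths (equivalently, all of its ai-connections are simple edges). -/
set_option linter.unusedVariables false

namespace AF
open PreFlow

lemma two_cycle_absurd {A : PreFlow} (hac : A.Acyclic) {a b v w : ℕ}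
    (ha : a ∈ A.E) (hb : b ∈ A.E)
    (h1 : A.up a = some v) (h2 : A.lo b = some v)
    (h3 : A.up b = some w) (h4 : A.lo a = some w) : False := by
  apply hac
  refine ⟨1, fun i => if i = 0 then a else b, ?_, ?_⟩
  · intro i; fin_cases i <;> simpa
  · intro i; fin_cases i <;>
      simp_all [h1, h2, h3, h4, Fin.ext_iff, Option.isSome]

lemma inner_label {A : PreFlow} (hd : A.degOK) {u e e' : ℕ}
    (hu : u ∈ A.V) (he : e ∈ A.E) (he' : e' ∈ A.E)
    (h1 : A.lo e = some u) (h2 : A.up e' = some u) :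
    A.η u = FlowLabel.acDown ∨ A.η u = FlowLabel.acUp := by
  have h := hd u hu
  have hUe : e ∈ A.Uedges u := Finset.mem_filter.2 ⟨he, h1⟩
  have hLe : e' ∈ A.Ledges u := Finset.mem_filter.2 ⟨he', h2⟩
  have hU : 0 < (A.Uedges u).card := Finset.card_pos.2 ⟨e, hUe⟩
  have hL : 0 < (A.Ledges u).card := Finset.card_pos.2 ⟨e', hLe⟩
  rw [h.1] at hL; rw [h.2] at hU
  cases hη : A.η u <;> simp [labDeg, hη] at hL hU ⊢

/-- No edge from a contraction to a cointeraction (rule `c↓-i↑` applies). -/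
lemma no_cd_iu {A : PreFlow} (hA : A.IsFlow) (hn : NormalC A) {e v₁ v₂ : ℕ}
    (he : e ∈ A.E) (hu : A.up e = some v₁) (hl : A.lo e = some v₂)
    (h1 : A.η v₁ = FlowLabel.acDown) (h2 : A.η v₂ = FlowLabel.aiUp) : False := by
  obtain ⟨hd, hE, hac, -⟩ := hA
  have hv₁ : v₁ ∈ A.V := (hE e he).1 v₁ hu
  have hv₂ : v₂ ∈ A.V := (hE e he).2 v₂ hl
  have hne : v₁ ≠ v₂ := by rintro rfl; rw [h1] at h2; simp at h2
  have hc1 : (A.Uedges v₁).card = 2 := by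
    have := (hd v₁ hv₁).2; rwa [h1] at this
  obtain ⟨e₁, e₂, h12, hset⟩ := Finset.card_eq_two.mp hc1
  have he₁ : e₁ ∈ A.Uedges v₁ := by rw [hset]; simp
  have he₂ : e₂ ∈ A.Uedges v₁ := by rw [hset]; simp
  obtain ⟨he₁E, hlo₁⟩ := Finset.mem_filter.mp he₁
  obtain ⟨he₂E, hlo₂⟩ := Finset.mem_filter.mp he₂
  have hc2 : (A.Uedges v₂).card = 2 := by
    have := (hd v₂ hv₂).2; rwa [h2] at this
  obtain ⟨e₃, he₃, h3e⟩ := Finset.exists_mem_ne (s := A.Uedges v₂) (by omega) e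
  obtain ⟨he₃E, hlo₃⟩ := Finset.mem_filter.mp he₃
  have hee₁ : e ≠ e₁ := by rintro rfl; rw [hl] at hlo₁; exact hne (Option.some_injective _ hlo₁).symm
  have hee₂ : e ≠ e₂ := by rintro rfl; rw [hl] at hlo₂; exact hne (Option.some_injective _ hlo₂).symm
  have h13 : e₁ ≠ e₃ := by rintro rfl; rw [hlo₁] at hlo₃; exact hne (Option.some_injective _ hlo₃)
  have h23 : e₂ ≠ e₃ := by rintro rfl; rw [hlo₂] at hlo₃; exact hne (Option.some_injective _ hlo₃)
  obtain ⟨v₃, hv₃⟩ := Infinite.exists_notMem_finset A.V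
  obtain ⟨g₁, hg₁⟩ := Infinite.exists_notMem_finset A.E
  obtain ⟨g₂, hg₂'⟩ := Infinite.exists_notMem_finset (insert g₁ A.E)
  have hg₂ : g₂ ∉ A.E := fun h => hg₂' (Finset.mem_insert_of_mem h)
  have hgg : g₁ ≠ g₂ := fun h => hg₂' (h ▸ Finset.mem_insert_self g₁ A.E)
  apply hn
  refine ⟨{ V := insert v₃ A.V, E := insert g₁ (insert g₂ (A.E.erase e)),
            η := Function.update (Function.update A.η v₁ .acUp) v₃ .aiUp,
            up := Function.update (Function.update A.up g₁ (some v₁)) g₂ (some v₁),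
            lo := Function.update (Function.update (Function.update
              (Function.update (Function.update A.lo e₁ (some v₂)) e₂ (some v₃))
                e₃ (some v₁)) g₁ (some v₂)) g₂ (some v₃) }, Or.inl ?_⟩
  exact ⟨v₁, v₂, v₃, e, e₁, e₂, e₃, g₁, g₂, hv₁, hv₂, hne, hv₃, h1, h2,
    he, he₁E, he₂E, he₃E, hee₁, hee₂, fun h => h3e h.symm, h12, h13, h23,
    hg₁, hg₂, hgg, hlo₁, hlo₂, hu, hl, hlo₃, rfl, rfl, rfl, rfl, rfl⟩

/-- No edge from an interaction to a cocontraction (rule `i↓-c↑` applies). -/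
lemma no_id_cu {A : PreFlow} (hA : A.IsFlow) (hn : NormalC A) {e v₁ v₂ : ℕ}
    (he : e ∈ A.E) (hu : A.up e = some v₂) (hl : A.lo e = some v₁)
    (h1 : A.η v₁ = FlowLabel.acUp) (h2 : A.η v₂ = FlowLabel.aiDown) : False := by
  obtain ⟨hd, hE, hac, -⟩ := hA
  have hv₁ : v₁ ∈ A.V := (hE e he).2 v₁ hl
  have hv₂ : v₂ ∈ A.V := (hE e he).1 v₂ hu
  have hne : v₁ ≠ v₂ := by rintro rfl; rw [h1] at h2; simp at h2
  have hc1 : (A.Ledges v₁).card = 2 := by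
    have := (hd v₁ hv₁).1; rwa [h1] at this
  obtain ⟨e₁, e₂, h12, hset⟩ := Finset.card_eq_two.mp hc1
  have he₁ : e₁ ∈ A.Ledges v₁ := by rw [hset]; simp
  have he₂ : e₂ ∈ A.Ledges v₁ := by rw [hset]; simp
  obtain ⟨he₁E, hup₁⟩ := Finset.mem_filter.mp he₁
  obtain ⟨he₂E, hup₂⟩ := Finset.mem_filter.mp he₂
  have hc2 : (A.Ledges v₂).card = 2 := by
    have := (hd v₂ hv₂).1; rwa [h2] at this
  obtain ⟨e₃, he₃, h3e⟩ := Finset.exists_mem_ne (s := A.Ledges v₂) (by omega) e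
  obtain ⟨he₃E, hup₃⟩ := Finset.mem_filter.mp he₃
  have hee₁ : e ≠ e₁ := by rintro rfl; rw [hu] at hup₁; exact hne (Option.some_injective _ hup₁).symm
  have hee₂ : e ≠ e₂ := by rintro rfl; rw [hu] at hup₂; exact hne (Option.some_injective _ hup₂).symm
  have h13 : e₁ ≠ e₃ := by rintro rfl; rw [hup₁] at hup₃; exact hne (Option.some_injective _ hup₃)
  have h23 : e₂ ≠ e₃ := by rintro rfl; rw [hup₂] at hup₃; exact hne (Option.some_injective _ hup₃)
  obtain ⟨v₃, hv₃⟩ := Infinite.exists_notMem_finset A.V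
  obtain ⟨g₁, hg₁⟩ := Infinite.exists_notMem_finset A.E
  obtain ⟨g₂, hg₂'⟩ := Infinite.exists_notMem_finset (insert g₁ A.E)
  have hg₂ : g₂ ∉ A.E := fun h => hg₂' (Finset.mem_insert_of_mem h)
  have hgg : g₁ ≠ g₂ := fun h => hg₂' (h ▸ Finset.mem_insert_self g₁ A.E)
  apply hn
  refine ⟨{ V := insert v₃ A.V, E := insert g₁ (insert g₂ (A.E.erase e)),
            η := Function.update (Function.update A.η v₁ .acDown) v₃ .aiDown,
            lo := Function.update (Function.update A.lo g₁ (some v₁)) g₂ (some v₁),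
            up := Function.update (Function.update (Function.update
              (Function.update (Function.update A.up e₁ (some v₂)) e₂ (some v₃))
                e₃ (some v₁)) g₁ (some v₂)) g₂ (some v₃) }, Or.inr (Or.inl ?_)⟩
  exact ⟨v₁, v₂, v₃, e, e₁, e₂, e₃, g₁, g₂, hv₁, hv₂, hne, hv₃, h1, h2,
    he, he₁E, he₂E, he₃E, hee₁, hee₂, fun h => h3e h.symm, h12, h13, h23,
    hg₁, hg₂, hgg, hup₁, hup₂, hl, hu, hup₃, rfl, rfl, rfl, rfl, rfl⟩

/-- No edge from a contraction to a cocontraction (rule `c↓-c↑` applies). -/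
lemma no_cd_cu {A : PreFlow} (hA : A.IsFlow) (hn : NormalC A) {e v₁ v₂ : ℕ}
    (he : e ∈ A.E) (hu : A.up e = some v₁) (hl : A.lo e = some v₂)
    (h1 : A.η v₁ = FlowLabel.acDown) (h2 : A.η v₂ = FlowLabel.acUp) : False := by
  obtain ⟨hd, hE, hac, -⟩ := hA
  have hv₁ : v₁ ∈ A.V := (hE e he).1 v₁ hu
  have hv₂ : v₂ ∈ A.V := (hE e he).2 v₂ hl
  have hne : v₁ ≠ v₂ := by rintro rfl; rw [h1] at h2; simp at h2
  have hc1 : (A.Uedges v₁).card = 2 := by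
    have := (hd v₁ hv₁).2; rwa [h1] at this
  obtain ⟨e₁, e₂, h12, hset⟩ := Finset.card_eq_two.mp hc1
  have he₁ : e₁ ∈ A.Uedges v₁ := by rw [hset]; simp
  have he₂ : e₂ ∈ A.Uedges v₁ := by rw [hset]; simp
  obtain ⟨he₁E, hlo₁⟩ := Finset.mem_filter.mp he₁
  obtain ⟨he₂E, hlo₂⟩ := Finset.mem_filter.mp he₂
  have hc2 : (A.Ledges v₂).card = 2 := by
    have := (hd v₂ hv₂).1; rwa [h2] at this
  obtain ⟨e₃, e₄, h34, hset'⟩ := Finset.card_eq_two.mp hc2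
  have he₃ : e₃ ∈ A.Ledges v₂ := by rw [hset']; simp
  have he₄ : e₄ ∈ A.Ledges v₂ := by rw [hset']; simp
  obtain ⟨he₃E, hup₃⟩ := Finset.mem_filter.mp he₃
  obtain ⟨he₄E, hup₄⟩ := Finset.mem_filter.mp he₄
  have hee₁ : e ≠ e₁ := by rintro rfl; rw [hl] at hlo₁; exact hne (Option.some_injective _ hlo₁).symm
  have hee₂ : e ≠ e₂ := by rintro rfl; rw [hl] at hlo₂; exact hne (Option.some_injective _ hlo₂).symm
  have hee₃ : e ≠ e₃ := by rintro rfl; rw [hu] at hup₃; exact hne (Option.some_injective _ hup₃)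
  have hee₄ : e ≠ e₄ := by rintro rfl; rw [hu] at hup₄; exact hne (Option.some_injective _ hup₄)
  have h13 : e₁ ≠ e₃ := by
    rintro rfl; exact two_cycle_absurd hac he he₁E hu hlo₁ hup₃ hl
  have h14 : e₁ ≠ e₄ := by
    rintro rfl; exact two_cycle_absurd hac he he₁E hu hlo₁ hup₄ hl
  have h23 : e₂ ≠ e₃ := by
    rintro rfl; exact two_cycle_absurd hac he he₂E hu hlo₂ hup₃ hl
  have h24 : e₂ ≠ e₄ := by
    rintro rfl; exact two_cycle_absurd hac he he₂E hu hlo₂ hup₄ hl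
  obtain ⟨v₃, hv₃⟩ := Infinite.exists_notMem_finset A.V
  obtain ⟨v₄, hv₄'⟩ := Infinite.exists_notMem_finset (insert v₃ A.V)
  have hv₄ : v₄ ∉ A.V := fun h => hv₄' (Finset.mem_insert_of_mem h)
  have hvv : v₃ ≠ v₄ := fun h => hv₄' (h ▸ Finset.mem_insert_self v₃ A.V)
  obtain ⟨g₁₁, hg₁₁⟩ := Infinite.exists_notMem_finset A.E
  obtain ⟨g₁₂, hg₁₂'⟩ := Infinite.exists_notMem_finset (insert g₁₁ A.E)
  obtain ⟨g₂₁, hg₂₁'⟩ := Infinite.exists_notMem_finset (insert g₁₂ (insert g₁₁ A.E))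
  obtain ⟨g₂₂, hg₂₂'⟩ := Infinite.exists_notMem_finset (insert g₂₁ (insert g₁₂ (insert g₁₁ A.E)))
  simp only [Finset.mem_insert, not_or] at hg₁₂' hg₂₁' hg₂₂'
  apply hn
  refine ⟨{ V := insert v₃ (insert v₄ A.V),
            E := insert g₁₁ (insert g₁₂ (insert g₂₁ (insert g₂₂ (A.E.erase e)))),
            η := Function.update (Function.update (Function.update
              (Function.update A.η v₁ .acUp) v₂ .acUp) v₃ .acDown) v₄ .acDown,
            up := Function.update (Function.update (Function.update
              (Function.update (Function.update (Function.update A.up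
                e₃ (some v₃)) e₄ (some v₄)) g₁₁ (some v₁)) g₁₂ (some v₁))
                  g₂₁ (some v₂)) g₂₂ (some v₂),
            lo := Function.update (Function.update (Function.update
              (Function.update (Function.update A.lo e₂ (some v₂)) g₁₁ (some v₃))
                g₁₂ (some v₄)) g₂₁ (some v₃)) g₂₂ (some v₄) },
         Or.inr (Or.inr ?_)⟩
  exact ⟨v₁, v₂, v₃, v₄, e, e₁, e₂, e₃, e₄, g₁₁, g₁₂, g₂₁, g₂₂,
    hv₁, hv₂, hne, hv₃, hv₄, hvv, h1, h2,
    he, he₁E, he₂E, he₃E, he₄E,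
    hee₁, hee₂, hee₃, hee₄, h12, h13, h14, h23, h24, h34,
    hg₁₁, hg₁₂'.2, hg₂₁'.2.2, hg₂₂'.2.2.2,
    fun h => hg₁₂'.1 h.symm, fun h => hg₂₁'.2.1 h.symm, fun h => hg₂₂'.2.2.1 h.symm,
    fun h => hg₂₁'.1 h.symm, fun h => hg₂₂'.2.1 h.symm, fun h => hg₂₂'.1 h.symm,
    hlo₁, hlo₂, hu, hl, hup₃, hup₄, rfl, rfl, rfl, rfl, rfl⟩

end AF

namespace AF
open PreFlow

lemma down_path_len {A : PreFlow} (hA : A.IsFlow) (hn : NormalC A)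
    {v v' : ℕ} (hη : A.η v = FlowLabel.aiDown) (hη' : A.η v' = FlowLabel.aiUp)
    {l : List ℕ} (hp : IsDownPath A (.ver v) (.ver v') l) : l.length = 1 := by
  obtain ⟨hne, hmem, hchain, hsrc, htgt⟩ := hp
  have hgetE : ∀ k, k < l.length → l.getD k 0 ∈ A.E := by
    intro k hk
    have : l.getD k 0 ∈ l := by
      rw [List.getD_eq_getElem l 0 hk]; exact List.getElem_mem hk
    exact hmem _ this
  have hlen : 0 < l.length := List.length_pos_iff.mpr hne
  have key : ∀ i, i + 1 < l.length → ∀ u, A.lo (l.getD i 0) = some u →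
      A.η u = FlowLabel.acDown := by
    intro i
    induction i with
    | zero =>
      intro hi u hu
      obtain ⟨w, hwV, hlo, hup⟩ := hchain 0 hi
      rw [hu] at hlo
      obtain rfl : u = w := Option.some_injective _ hlo
      rcases inner_label hA.1 hwV (hgetE 0 (by omega)) (hgetE 1 hi) hu hup with h | h
      · exact h
      · exact absurd (no_id_cu hA hn (hgetE 0 (by omega)) hsrc hu h hη) id
    | succ j ih =>
      intro hi u hu
      have hj : j + 1 < l.length := by omega
      obtain ⟨w, hwV, hloj, hupj⟩ := hchain j hj
      have hw : A.η w = FlowLabel.acDown := ih hj w hloj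
      obtain ⟨w', hw'V, hlo', hup'⟩ := hchain (j + 1) hi
      rw [hu] at hlo'
      obtain rfl : u = w' := Option.some_injective _ hlo'
      rcases inner_label hA.1 hw'V (hgetE (j + 1) (by omega)) (hgetE (j + 2) hi)
        hu hup' with h | h
      · exact h
      · exact absurd (no_cd_cu hA hn (hgetE (j + 1) (by omega)) hupj hu hw h) id
  by_contra hone
  have h2 : 2 ≤ l.length := by omega
  have hi : l.length - 2 + 1 < l.length := by omega
  obtain ⟨w, hwV, hlo, hup⟩ := hchain (l.length - 2) hi
  have hw : A.η w = FlowLabel.acDown := key _ hi w hlo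
  have harr : l.length - 2 + 1 = l.length - 1 := by omega
  rw [harr] at hup
  exact no_cd_iu hA hn (hgetE (l.length - 1) (by omega)) hup htgt hw hη'

lemma connection_length {A : PreFlow} (hA : A.IsFlow) (hn : NormalC A) :
    ∀ l, IsConnection A l → l.length = 1 := by
  rintro l ⟨v, v', hv, hv', hlab, hpath⟩
  have hfrom : ∀ (a b : ℕ) (m : List ℕ), a ∈ A.V → A.η a = FlowLabel.aiUp →
      IsDownPath A (.ver a) (.ver b) m → False := by
    rintro a b m haV ha ⟨hne, hmem, hchain, hsrc, htgt⟩
    have hk : 0 < m.length := List.length_pos_iff.mpr hne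
    have h0 : m.getD 0 0 ∈ m := by
      rw [List.getD_eq_getElem m 0 hk]; exact List.getElem_mem hk
    have hc := (hA.1 a haV).1
    rw [ha] at hc
    have hin : m.getD 0 0 ∈ A.Ledges a := Finset.mem_filter.2 ⟨hmem _ h0, hsrc⟩
    rw [Finset.card_eq_zero.mp hc] at hin
    exact absurd hin (Finset.notMem_empty _)
  rcases hlab with ⟨h1, h2⟩ | ⟨h1, h2⟩ <;> rcases hpath with hd | hd
  · exact down_path_len hA hn h1 h2 hd
  · exact absurd (hfrom v' v l.reverse hv' h2 hd) id
  · exact absurd (hfrom v v' l hv h1 hd) id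
  · have := down_path_len hA hn h2 h1 hd
    simpa using this

end AF

namespace AF

/-- If an atomic flow is normal for the flow rewriting
system `c`, then all of its ai-paths are clean paths (equivalently, all of
its ai-connections are simple edges). -/
theorem statement_11 (A : PreFlow) (hA : A.IsFlow) (hn : NormalC A) :
    (∀ ν ν' l, AIPath A ν ν' l → IsCleanPath A ν ν' l) ∧
    (∀ l, IsConnection A l → l.length = 1) := by
  have hconn := connection_length hA hn
  exact ⟨fun ν ν' l hl => ⟨hl, fun l₁ l₂ l₃ _ hc => hconn l₂ hc⟩, hconn⟩

end AF
end

section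
/- If an atomic flow A is normal for the flow rewriting system c and A →_w* B, then B is normal for c. -/
set_option linter.unusedVariables false

namespace AF

/-- A "bad edge": an edge whose endpoints form the core pattern of a
`c`-redex. -/
def Bad (X : PreFlow) : Prop :=
  ∃ e u w, e ∈ X.E ∧ X.up e = some u ∧ X.lo e = some w ∧
    ((X.η u = .acDown ∧ X.η w = .aiUp) ∨
     (X.η u = .aiDown ∧ X.η w = .acUp) ∨
     (X.η u = .acDown ∧ X.η w = .acUp))

lemma bad_of_stepC {X Y : PreFlow} (h : StepC X Y) : Bad X := by
  rcases h with h | h | h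
  · obtain ⟨v₁, v₂, v₃, e, e₁, e₂, e₃, g₁, g₂, hv₁, hv₂, hne, hv₃, hη₁, hη₂,
      he, he₁, he₂, he₃, _, _, _, _, _, _, _, _, _, _, _, hup, hlo, _⟩ := h
    exact ⟨e, v₁, v₂, he, hup, hlo, Or.inl ⟨hη₁, hη₂⟩⟩
  · obtain ⟨v₁, v₂, v₃, e, e₁, e₂, e₃, g₁, g₂, hv₁, hv₂, hne, hv₃, hη₁, hη₂,
      he, he₁, he₂, he₃, _, _, _, _, _, _, _, _, _, _, _, hlo, hup, _⟩ := h
    exact ⟨e, v₂, v₁, he, hup, hlo, Or.inr (Or.inl ⟨hη₂, hη₁⟩)⟩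
  · obtain ⟨v₁, v₂, v₃, v₄, e, e₁, e₂, e₃, e₄, g₁₁, g₁₂, g₂₁, g₂₂, hv₁, hv₂,
      hne, hv₃, hv₄, hne34, hη₁, hη₂, he, he₁, he₂, he₃, he₄, _, _, _, _, _,
      _, _, _, _, _, _, _, _, _, _, _, _, _, _, _, hl₁, hl₂, hup, hlo, _⟩ := h
    exact ⟨e, v₁, v₂, he, hup, hlo, Or.inr (Or.inr ⟨hη₁, hη₂⟩)⟩

lemma exists_other {s : Finset ℕ} (h : s.card = 2) {e : ℕ} (he : e ∈ s) :
    ∃ f, f ∈ s ∧ f ≠ e := by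
  rw [Finset.card_eq_two] at h
  obtain ⟨a, b, hab, rfl⟩ := h
  rcases Finset.mem_insert.1 he with rfl | hb
  · exact ⟨b, by simp, fun hb => hab hb.symm⟩
  · rcases Finset.mem_singleton.1 hb with rfl
    exact ⟨a, by simp, hab⟩

lemma exists_pair {s : Finset ℕ} (h : s.card = 2) :
    ∃ a b, a ∈ s ∧ b ∈ s ∧ a ≠ b := by
  rw [Finset.card_eq_two] at h
  obtain ⟨a, b, hab, rfl⟩ := h
  exact ⟨a, b, by simp, by simp, hab⟩

lemma no_one_cycle {X : PreFlow} (hacy : X.Acyclic) {e u : ℕ} (he : e ∈ X.E)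
    (h1 : X.up e = some u) (h2 : X.lo e = some u) : False := by
  exact hacy ⟨0, fun _ => e, fun _ => he, fun i => ⟨by rw [h1]; rfl, by rw [h1, h2]⟩⟩

lemma no_two_cycle {X : PreFlow} (hacy : X.Acyclic) {a b x y : ℕ}
    (ha : a ∈ X.E) (hb : b ∈ X.E) (h1 : X.up a = some x) (h2 : X.lo b = some x)
    (h3 : X.up b = some y) (h4 : X.lo a = some y) : False := by
  refine hacy ⟨1, fun i => if i = 0 then a else b, fun i => ?_, fun i => ?_⟩
  · dsimp only; split <;> assumption
  · fin_cases i <;> simp_all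

lemma mem_Uedges {X : PreFlow} {e v : ℕ} :
    e ∈ X.Uedges v ↔ e ∈ X.E ∧ X.lo e = some v := by
  simp [PreFlow.Uedges, Finset.mem_filter]

lemma mem_Ledges {X : PreFlow} {e v : ℕ} :
    e ∈ X.Ledges v ↔ e ∈ X.E ∧ X.up e = some v := by
  simp [PreFlow.Ledges, Finset.mem_filter]

lemma stepC_of_bad {X : PreFlow} (hX : X.IsFlow) (hb : Bad X) :
    ∃ Y, StepC X Y := by
  obtain ⟨hdeg, hend, hacy, -⟩ := hX
  obtain ⟨e, u, w, he, hup, hlo, hpat⟩ := hb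
  have hu : u ∈ X.V := (hend e he).1 u hup
  have hw : w ∈ X.V := (hend e he).2 w hlo
  obtain ⟨v₃, hv₃⟩ := Infinite.exists_notMem_finset X.V
  obtain ⟨g₁, hg₁⟩ := Infinite.exists_notMem_finset X.E
  obtain ⟨g₂, hg₂'⟩ := Infinite.exists_notMem_finset (insert g₁ X.E)
  have hg₂ : g₂ ∉ X.E := fun h => hg₂' (Finset.mem_insert_of_mem h)
  have hg12 : g₁ ≠ g₂ := fun h => hg₂' (h ▸ Finset.mem_insert_self _ _)
  rcases hpat with ⟨hηu, hηw⟩ | ⟨hηu, hηw⟩ | ⟨hηu, hηw⟩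
  · -- c↓-i↑ pattern
    have huw : u ≠ w := fun h => by rw [h, hηw] at hηu; cases hηu
    have hcard : (X.Uedges u).card = 2 := by
      have := (hdeg u hu).2; rw [hηu] at this; exact this
    obtain ⟨e₁, e₂, h1, h2, h12⟩ := exists_pair hcard
    rw [mem_Uedges] at h1 h2
    have hcard' : (X.Uedges w).card = 2 := by
      have := (hdeg w hw).2; rw [hηw] at this; exact this
    obtain ⟨e₃, h3, h3e⟩ := exists_other hcard' (mem_Uedges.2 ⟨he, hlo⟩)
    rw [mem_Uedges] at h3
    refine ⟨⟨insert v₃ X.V, insert g₁ (insert g₂ (X.E.erase e)),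
      Function.update (Function.update X.η u .acUp) v₃ .aiUp,
      Function.update (Function.update X.up g₁ (some u)) g₂ (some u),
      Function.update (Function.update (Function.update (Function.update
        (Function.update X.lo e₁ (some w)) e₂ (some v₃)) e₃ (some u))
          g₁ (some w)) g₂ (some v₃)⟩,
      Or.inl ⟨u, w, v₃, e, e₁, e₂, e₃, g₁, g₂, hu, hw, huw, hv₃,
      hηu, hηw, he, h1.1, h2.1, h3.1, ?_, ?_, fun h => h3e h.symm, h12, ?_, ?_,
      hg₁, hg₂, hg12, h1.2, h2.2, hup, hlo, h3.2, ?_⟩⟩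
    · exact fun h => huw (by rw [h, h1.2] at hlo; exact (Option.some.inj hlo))
    · exact fun h => huw (by rw [h, h2.2] at hlo; exact (Option.some.inj hlo))
    · exact fun h => huw (by rw [← h, h1.2] at h3; exact Option.some.inj h3.2)
    · exact fun h => huw (by rw [← h, h2.2] at h3; exact Option.some.inj h3.2)
    · exact ⟨rfl, rfl, rfl, rfl, rfl⟩
  · -- i↓-c↑ pattern
    have huw : w ≠ u := fun h => by rw [h, hηu] at hηw; cases hηw
    have hcard : (X.Ledges w).card = 2 := by
      have := (hdeg w hw).1; rw [hηw] at this; exact this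
    obtain ⟨e₁, e₂, h1, h2, h12⟩ := exists_pair hcard
    rw [mem_Ledges] at h1 h2
    have hcard' : (X.Ledges u).card = 2 := by
      have := (hdeg u hu).1; rw [hηu] at this; exact this
    obtain ⟨e₃, h3, h3e⟩ := exists_other hcard' (mem_Ledges.2 ⟨he, hup⟩)
    rw [mem_Ledges] at h3
    refine ⟨⟨insert v₃ X.V, insert g₁ (insert g₂ (X.E.erase e)),
      Function.update (Function.update X.η w .acDown) v₃ .aiDown,
      Function.update (Function.update (Function.update (Function.update
        (Function.update X.up e₁ (some u)) e₂ (some v₃)) e₃ (some w))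
          g₁ (some u)) g₂ (some v₃),
      Function.update (Function.update X.lo g₁ (some w)) g₂ (some w)⟩,
      Or.inr (Or.inl ⟨w, u, v₃, e, e₁, e₂, e₃, g₁, g₂, hw, hu, huw,
      hv₃, hηw, hηu, he, h1.1, h2.1, h3.1, ?_, ?_, fun h => h3e h.symm, h12,
      ?_, ?_, hg₁, hg₂, hg12, h1.2, h2.2, hlo, hup, h3.2, ?_⟩)⟩
    · exact fun h => huw (by rw [h, h1.2] at hup; exact (Option.some.inj hup))
    · exact fun h => huw (by rw [h, h2.2] at hup; exact (Option.some.inj hup))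
    · exact fun h => huw (by rw [← h, h1.2] at h3; exact Option.some.inj h3.2)
    · exact fun h => huw (by rw [← h, h2.2] at h3; exact Option.some.inj h3.2)
    · exact ⟨rfl, rfl, rfl, rfl, rfl⟩
  · -- c↓-c↑ pattern
    have huw : u ≠ w := fun h => by rw [h, hηw] at hηu; cases hηu
    have hcard : (X.Uedges u).card = 2 := by
      have := (hdeg u hu).2; rw [hηu] at this; exact this
    obtain ⟨e₁, e₂, h1, h2, h12⟩ := exists_pair hcard
    rw [mem_Uedges] at h1 h2
    have hcard' : (X.Ledges w).card = 2 := by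
      have := (hdeg w hw).1; rw [hηw] at this; exact this
    obtain ⟨e₃, e₄, h3, h4, h34⟩ := exists_pair hcard'
    rw [mem_Ledges] at h3 h4
    obtain ⟨v₄, hv₄'⟩ := Infinite.exists_notMem_finset (insert v₃ X.V)
    have hv₄ : v₄ ∉ X.V := fun h => hv₄' (Finset.mem_insert_of_mem h)
    have hv34 : v₃ ≠ v₄ := fun h => hv₄' (h ▸ Finset.mem_insert_self _ _)
    obtain ⟨g₃, hg₃'⟩ := Infinite.exists_notMem_finset (insert g₁ (insert g₂ X.E))
    obtain ⟨g₄, hg₄'⟩ := Infinite.exists_notMem_finset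
      (insert g₁ (insert g₂ (insert g₃ X.E)))
    simp only [Finset.mem_insert, not_or] at hg₃' hg₄'
    refine ⟨⟨insert v₃ (insert v₄ X.V),
      insert g₁ (insert g₂ (insert g₃ (insert g₄ (X.E.erase e)))),
      Function.update (Function.update (Function.update
        (Function.update X.η u .acUp) w .acUp) v₃ .acDown) v₄ .acDown,
      Function.update (Function.update (Function.update (Function.update
        (Function.update (Function.update X.up e₃ (some v₃)) e₄ (some v₄))
          g₁ (some u)) g₂ (some u)) g₃ (some w)) g₄ (some w),
      Function.update (Function.update (Function.update (Function.update
        (Function.update X.lo e₂ (some w)) g₁ (some v₃)) g₂ (some v₄))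
          g₃ (some v₃)) g₄ (some v₄)⟩,
      Or.inr (Or.inr ⟨u, w, v₃, v₄, e, e₁, e₂, e₃, e₄, g₁, g₂, g₃, g₄,
      hu, hw, huw, hv₃, hv₄, hv34, hηu, hηw, he, h1.1, h2.1, h3.1, h4.1,
      ?_, ?_, ?_, ?_, h12, ?_, ?_, ?_, ?_, h34,
      hg₁, hg₂, hg₃'.2.2, hg₄'.2.2.2, hg12, fun h => hg₃'.1 h.symm,
      fun h => hg₄'.1 h.symm, fun h => hg₃'.2.1 h.symm,
      fun h => hg₄'.2.1 h.symm, fun h => hg₄'.2.2.1 h.symm,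
      h1.2, h2.2, hup, hlo, h3.2, h4.2, ?_⟩)⟩
    · exact fun h => huw (by rw [h, h1.2] at hlo; exact (Option.some.inj hlo))
    · exact fun h => huw (by rw [h, h2.2] at hlo; exact (Option.some.inj hlo))
    · exact fun h => huw (by rw [h, h3.2] at hup; exact (Option.some.inj hup).symm)
    · exact fun h => huw (by rw [h, h4.2] at hup; exact (Option.some.inj hup).symm)
    · exact fun h => no_two_cycle hacy he h1.1 hup h1.2 (h ▸ h3.2) hlo
    · exact fun h => no_two_cycle hacy he h1.1 hup h1.2 (h ▸ h4.2) hlo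
    · exact fun h => no_two_cycle hacy he h2.1 hup h2.2 (h ▸ h3.2) hlo
    · exact fun h => no_two_cycle hacy he h2.1 hup h2.2 (h ▸ h4.2) hlo
    · exact ⟨rfl, rfl, rfl, rfl, rfl⟩

lemma bad_back {X Y : PreFlow} (h : StepW X Y) (hb : Bad Y) : Bad X := by
  obtain ⟨f, u, w, hfE, hfu, hfw, hpat⟩ := hb
  rcases h with h | h | h | h | h | h | h
  · -- w↓-c↓
    obtain ⟨v₁, v₂, e, e₂, e₃, hv₁, hv₂, hvne, hη₁, hη₂, he, he₂, he₃, hee₂,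
      hee₃, he₂e₃, hupe, hloe, hloe₂, hupe₃, hV, hE, hη, hup, hlo⟩ := h
    rw [hE] at hfE
    have hfE' : f ∈ X.E := Finset.mem_of_mem_erase (Finset.mem_of_mem_erase hfE)
    rw [hup] at hfu
    rw [hη] at hpat
    by_cases hfe₂ : f = e₂
    · rw [hlo, hfe₂, Function.update_self] at hfw
      refine ⟨e₃, v₂, w, he₃, hupe₃, hfw, ?_⟩
      rcases hpat with ⟨_, h2⟩ | ⟨_, h2⟩ | ⟨_, h2⟩
      · exact Or.inl ⟨hη₂, h2⟩
      · exact Or.inr (Or.inr ⟨hη₂, h2⟩)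
      · exact Or.inr (Or.inr ⟨hη₂, h2⟩)
    · rw [hlo, Function.update_of_ne hfe₂] at hfw
      exact ⟨f, u, w, hfE', hfu, hfw, hpat⟩
  · -- c↑-w↑
    obtain ⟨v₁, v₂, e, e₂, e₃, hv₁, hv₂, hvne, hη₁, hη₂, he, he₂, he₃, hee₂,
      hee₃, he₂e₃, hloe, hupe, hupe₂, hloe₃, hV, hE, hη, hlo, hup⟩ := h
    rw [hE] at hfE
    have hfE' : f ∈ X.E := Finset.mem_of_mem_erase (Finset.mem_of_mem_erase hfE)
    rw [hlo] at hfw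
    rw [hη] at hpat
    by_cases hfe₂ : f = e₂
    · rw [hup, hfe₂, Function.update_self] at hfu
      refine ⟨e₃, u, v₂, he₃, hfu, hloe₃, ?_⟩
      rcases hpat with ⟨h1, _⟩ | ⟨h1, _⟩ | ⟨h1, _⟩
      · exact Or.inr (Or.inr ⟨h1, hη₂⟩)
      · exact Or.inr (Or.inl ⟨h1, hη₂⟩)
      · exact Or.inr (Or.inr ⟨h1, hη₂⟩)
    · rw [hup, Function.update_of_ne hfe₂] at hfu
      exact ⟨f, u, w, hfE', hfu, hfw, hpat⟩
  · -- w↓-i↑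
    obtain ⟨v₁, v₂, e, e₂, hv₁, hv₂, hvne, hη₁, hη₂, he, he₂, hee₂, hupe,
      hloe, hloe₂, hV, hE, hη, hup, hlo⟩ := h
    rw [hE] at hfE
    have hfE' : f ∈ X.E := Finset.mem_of_mem_erase hfE
    rw [hup] at hfu; rw [hlo] at hfw; rw [hη] at hpat
    have huv : u ≠ v₂ := by
      rintro rfl
      rcases hpat with ⟨h1, _⟩ | ⟨h1, _⟩ | ⟨h1, _⟩ <;>
        rw [Function.update_self] at h1 <;> cases h1
    have hwv : w ≠ v₂ := by
      rintro rfl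
      rcases hpat with ⟨_, h2⟩ | ⟨_, h2⟩ | ⟨_, h2⟩ <;>
        rw [Function.update_self] at h2 <;> cases h2
    rw [Function.update_of_ne huv, Function.update_of_ne hwv] at hpat
    exact ⟨f, u, w, hfE', hfu, hfw, hpat⟩
  · -- i↓-w↑
    obtain ⟨v₁, v₂, e, e₂, hv₁, hv₂, hvne, hη₁, hη₂, he, he₂, hee₂, hloe,
      hupe, hupe₂, hV, hE, hη, hup, hlo⟩ := h
    rw [hE] at hfE
    have hfE' : f ∈ X.E := Finset.mem_of_mem_erase hfE
    rw [hup] at hfu; rw [hlo] at hfw; rw [hη] at hpat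
    have huv : u ≠ v₂ := by
      rintro rfl
      rcases hpat with ⟨h1, _⟩ | ⟨h1, _⟩ | ⟨h1, _⟩ <;>
        rw [Function.update_self] at h1 <;> cases h1
    have hwv : w ≠ v₂ := by
      rintro rfl
      rcases hpat with ⟨_, h2⟩ | ⟨_, h2⟩ | ⟨_, h2⟩ <;>
        rw [Function.update_self] at h2 <;> cases h2
    rw [Function.update_of_ne huv, Function.update_of_ne hwv] at hpat
    exact ⟨f, u, w, hfE', hfu, hfw, hpat⟩
  · -- w↓-w↑
    obtain ⟨v₁, v₂, e, hv₁, hv₂, hvne, hη₁, hη₂, he, hupe, hloe, hV, hE, hη,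
      hup, hlo⟩ := h
    rw [hE] at hfE
    rw [hη] at hpat; rw [hup] at hfu; rw [hlo] at hfw
    exact ⟨f, u, w, Finset.mem_of_mem_erase hfE, hfu, hfw, hpat⟩
  · -- w↓-c↑
    obtain ⟨v₁, v₂, e, e₁, e₂, hv₁, hv₂, hvne, hη₁, hη₂, he, he₁, he₂, hee₁,
      hee₂, he₁e₂, hupe, hloe, hupe₁, hupe₂, hV, hE, hη, hup, hlo⟩ := h
    rw [hE] at hfE
    have hfE' : f ∈ X.E := Finset.mem_of_mem_erase hfE
    rw [hup] at hfu; rw [hlo] at hfw; rw [hη] at hpat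
    have huv : u ≠ v₂ := by
      rintro rfl
      rcases hpat with ⟨h1, _⟩ | ⟨h1, _⟩ | ⟨h1, _⟩ <;>
        rw [Function.update_self] at h1 <;> cases h1
    have hwv : w ≠ v₂ := by
      rintro rfl
      rcases hpat with ⟨_, h2⟩ | ⟨_, h2⟩ | ⟨_, h2⟩ <;>
        rw [Function.update_self] at h2 <;> cases h2
    rw [Function.update_of_ne huv, Function.update_of_ne hwv] at hpat
    by_cases hfe₁ : f = e₁
    · exfalso
      rw [hfe₁, Function.update_self] at hfu
      have : u = v₁ := Option.some.inj hfu.symm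
      rw [this, hη₁] at hpat
      rcases hpat with ⟨h1, _⟩ | ⟨h1, _⟩ | ⟨h1, _⟩ <;> cases h1
    · rw [Function.update_of_ne hfe₁] at hfu
      exact ⟨f, u, w, hfE', hfu, hfw, hpat⟩
  · -- c↓-w↑
    obtain ⟨v₁, v₂, e, e₁, e₂, hv₁, hv₂, hvne, hη₁, hη₂, he, he₁, he₂, hee₁,
      hee₂, he₁e₂, hloe, hupe, hloe₁, hloe₂, hV, hE, hη, hlo, hup⟩ := h
    rw [hE] at hfE
    have hfE' : f ∈ X.E := Finset.mem_of_mem_erase hfE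
    rw [hup] at hfu; rw [hlo] at hfw; rw [hη] at hpat
    have huv : u ≠ v₂ := by
      rintro rfl
      rcases hpat with ⟨h1, _⟩ | ⟨h1, _⟩ | ⟨h1, _⟩ <;>
        rw [Function.update_self] at h1 <;> cases h1
    have hwv : w ≠ v₂ := by
      rintro rfl
      rcases hpat with ⟨_, h2⟩ | ⟨_, h2⟩ | ⟨_, h2⟩ <;>
        rw [Function.update_self] at h2 <;> cases h2
    rw [Function.update_of_ne huv, Function.update_of_ne hwv] at hpat
    by_cases hfe₁ : f = e₁
    · exfalso
      rw [hfe₁, Function.update_self] at hfw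
      have : w = v₁ := Option.some.inj hfw.symm
      rw [this, hη₁] at hpat
      rcases hpat with ⟨_, h2⟩ | ⟨_, h2⟩ | ⟨_, h2⟩ <;> cases h2
    · rw [Function.update_of_ne hfe₁] at hfw
      exact ⟨f, u, w, hfE', hfu, hfw, hpat⟩

/-- If an atomic flow `A` is normal for the flow
rewriting system `c` and `A →w* B`, then `B` is normal for `c`. -/
theorem statement_12 (A B : PreFlow) (hA : A.IsFlow) (hn : NormalC A)
    (h : Relation.ReflTransGen StepW A B) : NormalC B := by
  rintro ⟨C, hC⟩
  have hbB : Bad B := bad_of_stepC hC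
  refine hn (stepC_of_bad hA ?_)
  clear hn hC
  revert hbB
  induction h with
  | refl => exact id
  | tail _ step ih => exact fun hb => ih (bad_back step hb)

end AF
end
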